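/- arXiv:1101.5459 — 5 statements merged into one kernel-verified Lean document; each statement's English description precedes it below -/
import Mathlib

section
/- Let G be a finite strongly connected directed graph (loops and multiple edges allowed; for any two vertices u, v there exists a path from u to v). Then for any vertices u, v of G, the sequence {#L^G_{u,v,n}}_{n≥0} counting the paths from u to v of length n is regular. Equivalently, for an irreducible square matrix M with nonnegative integer entries, every entry sequence {(M^n)_{u,v}}_n is regular. -/
/-!
Path counts are the entries of the powers of the adjacency matrix, so it suffices to treat an
irreducible matrix `M` over `ℕ`. If no power `M ^ q`, `q ≥ 1`, has a positive entry at `(a, a)`,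
then `(M ^ n) a b = 0` for `n ≥ 1`. Otherwise the block `P` of `M ^ q` on the vertices reachable
from `a` is primitive: some `P ^ K` has only positive entries.

For a matrix `R` with positive entries, the ratios `(y ᵥ* R ᵥ* R) j / (y ᵥ* R) j` are averages of
the ratios `(y ᵥ* R) i / y i` with weights uniformly bounded below, so the spread between the
largest and the smallest ratio contracts geometrically along `y ᵥ* R ^ k` (Dobrushin). The ratios
thus converge to some `c > 0`, fast enough that every entry of `R ^ k / c ^ k` converges to a
positive limit. Along each residue class modulo `q * K`, `(M ^ n) a b` is a nonnegative
combination of the entries of one row of `(P ^ K) ^ k`, hence either zero or asymptotic to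
`γ * c ^ k`, and `c ≥ 1` because these entries are positive integers.
-/

open Filter
open scoped Classical

namespace Paper

/-- `p : Fin n → E` is a path from `u` to `v` in the directed graph with source and
target maps `src`, `tgt : E → V`: consecutive edges are compatible, the first edge
starts at `u` and the last edge ends at `v`; the empty path (`n = 0`) requires `u = v`. -/
def IsPath {V E : Type*} (src tgt : E → V) (u v : V) {n : ℕ} (p : Fin n → E) : Prop :=
  (∀ (i : ℕ) (h : i + 1 < n), tgt (p ⟨i, Nat.lt_of_succ_lt h⟩) = src (p ⟨i + 1, h⟩)) ∧
  (∀ h : 0 < n, src (p ⟨0, h⟩) = u ∧ tgt (p ⟨n - 1, Nat.sub_lt h one_pos⟩) = v) ∧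
  (n = 0 → u = v)

/-- The number of paths of length `n` from `u` to `v`, i.e. `#L^G_{u,v,n}`. -/
noncomputable def numPaths {V E : Type*} [Fintype E] (src tgt : E → V) (u v : V) (n : ℕ) : ℕ :=
  Fintype.card {p : Fin n → E // IsPath src tgt u v p}

/-- A sequence of nonnegative reals is regular if, along each arithmetic progression
modulo some `q ≥ 1`, it is either eventually zero or asymptotic to `a k^b c^k`
with `a > 0`, `b ∈ ℕ`, `c ≥ 1`. -/
def RegularSeq (x : ℕ → ℝ) : Prop :=
  ∃ q : ℕ, 0 < q ∧ ∀ r : ℕ, r < q →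
    (∀ᶠ k in atTop, x (q * k + r) = 0) ∨
    (∃ a : ℝ, 0 < a ∧ ∃ b : ℕ, ∃ c : ℝ, 1 ≤ c ∧
      Tendsto (fun k : ℕ => x (q * k + r) / (a * (k : ℝ) ^ b * c ^ k)) atTop (nhds 1))

end Paper

open Topology Finset

section WeightedSum

variable {ι : Type*} [Fintype ι]

theorem sum_mul_mem_Icc {w f : ι → ℝ} {lo hi : ℝ} (hw : ∀ i, 0 ≤ w i)
    (hf : ∀ i, f i ∈ Set.Icc lo hi) :
    ∑ i, w i * f i ∈ Set.Icc ((∑ i, w i) * lo) ((∑ i, w i) * hi) := by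
  rw [sum_mul, sum_mul]
  exact ⟨sum_le_sum fun i _ => mul_le_mul_of_nonneg_left (hf i).1 (hw i),
    sum_le_sum fun i _ => mul_le_mul_of_nonneg_left (hf i).2 (hw i)⟩

/-- Dobrushin's contraction estimate. -/
theorem sum_mul_sub_sum_mul_le {p p' π f : ι → ℝ} {δ lo hi : ℝ}
    (hp : ∀ i, δ * π i ≤ p i) (hp' : ∀ i, δ * π i ≤ p' i)
    (hp₁ : ∑ i, p i = 1) (hp'₁ : ∑ i, p' i = 1) (hπ₁ : ∑ i, π i = 1)
    (hf : ∀ i, f i ∈ Set.Icc lo hi) :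
    ∑ i, p i * f i - ∑ i, p' i * f i ≤ (1 - δ) * (hi - lo) := by
  have key : ∀ w : ι → ℝ, (∀ i, δ * π i ≤ w i) → ∑ i, w i = 1 →
      ∑ i, w i * f i - δ * ∑ i, π i * f i ∈ Set.Icc ((1 - δ) * lo) ((1 - δ) * hi) := by
    intro w hw hw₁
    have hmass : ∑ i, (w i - δ * π i) = 1 - δ := by
      rw [sum_sub_distrib, ← mul_sum, hw₁, hπ₁, mul_one]
    have hsum : ∑ i, (w i - δ * π i) * f i = ∑ i, w i * f i - δ * ∑ i, π i * f i := by
      simp only [sub_mul, sum_sub_distrib, mul_sum, mul_assoc]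
    rw [← hsum, ← hmass]
    exact sum_mul_mem_Icc (fun i => sub_nonneg.2 (hw i)) hf
  have h := key p hp hp₁
  have h' := key p' hp' hp'₁
  linarith [h.2, h'.1]

end WeightedSum

theorem abs_log_div_le {r s lo hi : ℝ} (hlo : 0 < lo) (hr : r ∈ Set.Icc lo hi)
    (hs : s ∈ Set.Icc lo hi) : |Real.log (r / s)| ≤ (hi - lo) / lo := by
  have hr₀ : 0 < r := hlo.trans_le hr.1
  have hs₀ : 0 < s := hlo.trans_le hs.1
  have bound : ∀ {x y : ℝ}, 0 < y → x ∈ Set.Icc lo hi → y ∈ Set.Icc lo hi →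
      Real.log (x / y) ≤ (hi - lo) / lo := fun {x y} hy hx hy' =>
    calc Real.log (x / y) ≤ x / y - 1 :=
          Real.log_le_sub_one_of_pos (div_pos (hlo.trans_le hx.1) hy)
      _ = (x - y) / y := by field_simp
      _ ≤ (hi - lo) / lo :=
          div_le_div₀ (by linarith [hx.1, hx.2]) (by linarith [hx.2, hy'.1]) hlo hy'.1
  rw [abs_le]
  refine ⟨?_, bound hs₀ hr hs⟩
  have := bound hr₀ hs hr
  rw [Real.log_div hs₀.ne' hr₀.ne'] at this
  rw [Real.log_div hr₀.ne' hs₀.ne']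
  linarith

theorem exists_pos_tendsto_of_abs_log_div_le {u d : ℕ → ℝ} (hu : ∀ k, 0 < u k)
    (hd : Summable d) (h : ∀ k, |Real.log (u (k + 1) / u k)| ≤ d k) :
    ∃ L, 0 < L ∧ Tendsto u atTop (𝓝 L) := by
  have hcauchy : CauchySeq fun k => Real.log (u k) := by
    refine cauchySeq_of_dist_le_of_summable d (fun k => ?_) hd
    rw [Real.dist_eq, abs_sub_comm, ← Real.log_div (hu _).ne' (hu _).ne']
    exact h k
  obtain ⟨ℓ, hℓ⟩ := cauchySeq_tendsto_of_complete hcauchy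
  refine ⟨Real.exp ℓ, Real.exp_pos ℓ, ?_⟩
  simpa only [Function.comp_def, Real.exp_log (hu _)] using
    (Real.continuous_exp.tendsto ℓ).comp hℓ

theorem one_le_of_tendsto_div_pow {y : ℕ → ℝ} {c L : ℝ} (hc : 0 < c)
    (hy : ∀ᶠ k in atTop, 1 ≤ y k) (h : Tendsto (fun k => y k / c ^ k) atTop (𝓝 L)) :
    1 ≤ c := by
  by_contra! hc₁
  have hzero : Tendsto y atTop (𝓝 0) := by
    have := h.mul (tendsto_pow_atTop_nhds_zero_of_lt_one hc.le hc₁)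
    rw [mul_zero] at this
    refine this.congr fun k => ?_
    field_simp
  have := ge_of_tendsto hzero hy
  norm_num at this

theorem tendsto_sum_mul_div_pow_or_eq_zero {ι : Type*} [Fintype ι] {y : ℕ → ι → ℝ} {c : ℝ}
    {L g : ι → ℝ} (hL : ∀ j, 0 < L j)
    (hlim : ∀ j, Tendsto (fun k => y k j / c ^ k) atTop (𝓝 (L j))) (hg : ∀ j, 0 ≤ g j) :
    (∀ k, ∑ j, y k j * g j = 0) ∨
      ∃ γ > 0, Tendsto (fun k => (∑ j, y k j * g j) / c ^ k) atTop (𝓝 γ) := by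
  by_cases hg₀ : g = 0
  · exact Or.inl fun k => by simp [hg₀]
  obtain ⟨j, hj⟩ := Function.ne_iff.1 hg₀
  refine Or.inr ⟨∑ j, L j * g j, sum_pos' (fun j _ => mul_nonneg (hL j).le (hg j))
    ⟨j, mem_univ j, mul_pos (hL j) ((hg j).lt_of_ne' hj)⟩, ?_⟩
  simp_rw [sum_div]
  exact tendsto_finsetSum _ fun j _ => ((hlim j).mul_const (g j)).congr fun k => by ring

namespace Matrix

variable {ι : Type*} [Fintype ι]

theorem ratio_vecMul_eq_sum (R : Matrix ι ι ℝ) {y : ι → ℝ} (hy : ∀ i, 0 < y i) (j : ι) :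
    (y ᵥ* R ᵥ* R) j / (y ᵥ* R) j = ∑ i, y i * R i j / (y ᵥ* R) j * ((y ᵥ* R) i / y i) := by
  rw [show (y ᵥ* R ᵥ* R) j = ∑ i, (y ᵥ* R) i * R i j from rfl, sum_div]
  refine sum_congr rfl fun i _ => ?_
  have := (hy i).ne'
  field_simp

variable [Nonempty ι]

noncomputable def minRatio (R : Matrix ι ι ℝ) (y : ι → ℝ) : ℝ :=
  univ.inf' univ_nonempty fun j => (y ᵥ* R) j / y j

noncomputable def maxRatio (R : Matrix ι ι ℝ) (y : ι → ℝ) : ℝ :=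
  univ.sup' univ_nonempty fun j => (y ᵥ* R) j / y j

theorem ratio_mem_Icc_minRatio_maxRatio (R : Matrix ι ι ℝ) (y : ι → ℝ) (j : ι) :
    (y ᵥ* R) j / y j ∈ Set.Icc (minRatio R y) (maxRatio R y) :=
  ⟨inf'_le _ (mem_univ j), le_sup' (fun j => (y ᵥ* R) j / y j) (mem_univ j)⟩

section Step

variable {R : Matrix ι ι ℝ} (hR : ∀ i j, 0 < R i j) {y : ι → ℝ} (hy : ∀ i, 0 < y i)
include hR hy

theorem vecMul_pos_of_pos (j : ι) : 0 < (y ᵥ* R) j :=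
  sum_pos (fun i _ => mul_pos (hy i) (hR i j)) univ_nonempty

theorem sum_mul_div_vecMul_eq_one (j : ι) : ∑ i, y i * R i j / (y ᵥ* R) j = 1 := by
  rw [← sum_div]
  exact div_self (vecMul_pos_of_pos hR hy j).ne'

theorem ratio_vecMul_mem_Icc (j : ι) :
    (y ᵥ* R ᵥ* R) j / (y ᵥ* R) j ∈ Set.Icc (minRatio R y) (maxRatio R y) := by
  have h := sum_mul_mem_Icc
    (fun i => div_nonneg (mul_pos (hy i) (hR i j)).le (vecMul_pos_of_pos hR hy j).le)
    (ratio_mem_Icc_minRatio_maxRatio R y)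
  rwa [sum_mul_div_vecMul_eq_one hR hy, one_mul, one_mul, ← ratio_vecMul_eq_sum R hy] at h

theorem minRatio_le_minRatio_vecMul : minRatio R y ≤ minRatio R (y ᵥ* R) :=
  le_inf' _ _ fun j _ => (ratio_vecMul_mem_Icc hR hy j).1

theorem maxRatio_vecMul_le_maxRatio : maxRatio R (y ᵥ* R) ≤ maxRatio R y :=
  sup'_le _ _ fun j _ => (ratio_vecMul_mem_Icc hR hy j).2

end Step

section Orbit

variable {R : Matrix ι ι ℝ} (hR : ∀ i j, 0 < R i j)
include hR

theorem exists_maxRatio_sub_minRatio_vecMul_le :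
    ∃ θ : ℝ, 0 ≤ θ ∧ θ < 1 ∧ ∀ y : ι → ℝ, (∀ i, 0 < y i) →
      maxRatio R (y ᵥ* R) - minRatio R (y ᵥ* R) ≤ θ * (maxRatio R y - minRatio R y) := by
  obtain ⟨⟨i₀, j₀⟩, hmin⟩ := Finite.exists_min fun p : ι × ι => R p.1 p.2
  obtain ⟨⟨i₁, j₁⟩, hmax⟩ := Finite.exists_max fun p : ι × ι => R p.1 p.2
  have hm := hR i₀ j₀
  have hmM : R i₀ j₀ ≤ R i₁ j₁ := hmin (i₁, j₁)
  refine ⟨1 - R i₀ j₀ / R i₁ j₁, ?_, ?_, fun y hy => ?_⟩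
  · rw [sub_nonneg, div_le_one (hm.trans_le hmM)]
    exact hmM
  · linarith [div_pos hm (hm.trans_le hmM)]
  set T := ∑ i, y i
  have hT : 0 < T := sum_pos (fun i _ => hy i) univ_nonempty
  have hdom : ∀ j i, R i₀ j₀ / R i₁ j₁ * (y i / T) ≤ y i * R i j / (y ᵥ* R) j := by
    intro j i
    have hyR : (y ᵥ* R) j ≤ R i₁ j₁ * T := by
      rw [mul_sum]
      exact sum_le_sum fun i _ => by
        rw [mul_comm]; exact mul_le_mul_of_nonneg_right (hmax (i, j)) (hy i).le
    calc R i₀ j₀ / R i₁ j₁ * (y i / T) = y i * R i₀ j₀ / (R i₁ j₁ * T) := by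
          field_simp
      _ ≤ y i * R i j / (y ᵥ* R) j :=
          div_le_div₀ (mul_pos (hy i) (hR i j)).le
            (mul_le_mul_of_nonneg_left (hmin (i, j)) (hy i).le) (vecMul_pos_of_pos hR hy j) hyR
  obtain ⟨j, -, hj⟩ := exists_mem_eq_sup' univ_nonempty fun j => (y ᵥ* R ᵥ* R) j / (y ᵥ* R) j
  obtain ⟨j', -, hj'⟩ := exists_mem_eq_inf' univ_nonempty fun j => (y ᵥ* R ᵥ* R) j / (y ᵥ* R) j
  rw [maxRatio, hj, minRatio, hj', ratio_vecMul_eq_sum R hy, ratio_vecMul_eq_sum R hy]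
  refine sum_mul_sub_sum_mul_le (hdom j) (hdom j') (sum_mul_div_vecMul_eq_one hR hy j)
    (sum_mul_div_vecMul_eq_one hR hy j') ?_ (ratio_mem_Icc_minRatio_maxRatio R y)
  rw [← sum_div, div_self hT.ne']

variable [DecidableEq ι]

section Positive

variable {x : ι → ℝ} (hx : ∀ i, 0 < x i)
include hx

theorem vecMul_pow_pos (k : ℕ) (i : ι) : 0 < (x ᵥ* R ^ k) i := by
  induction k generalizing i with
  | zero => simpa using hx i
  | succ k ih => rw [pow_succ, ← vecMul_vecMul]; exact vecMul_pos_of_pos hR ih i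

theorem monotone_minRatio_vecMul_pow : Monotone fun k => minRatio R (x ᵥ* R ^ k) :=
  monotone_nat_of_le_succ fun k => by
    simpa only [pow_succ, ← vecMul_vecMul] using
      minRatio_le_minRatio_vecMul hR (vecMul_pow_pos hR hx k)

theorem antitone_maxRatio_vecMul_pow : Antitone fun k => maxRatio R (x ᵥ* R ^ k) :=
  antitone_nat_of_succ_le fun k => by
    simpa only [pow_succ, ← vecMul_vecMul] using
      maxRatio_vecMul_le_maxRatio hR (vecMul_pow_pos hR hx k)

theorem minRatio_vecMul_pow_le_maxRatio (k l : ℕ) :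
    minRatio R (x ᵥ* R ^ k) ≤ maxRatio R (x ᵥ* R ^ l) :=
  have h := ratio_mem_Icc_minRatio_maxRatio R (x ᵥ* R ^ max k l) (Classical.arbitrary ι)
  (monotone_minRatio_vecMul_pow hR hx (le_max_left k l)).trans
    (h.1.trans (h.2.trans (antitone_maxRatio_vecMul_pow hR hx (le_max_right k l))))

end Positive

theorem exists_maxRatio_sub_minRatio_vecMul_pow_le :
    ∃ θ : ℝ, 0 ≤ θ ∧ θ < 1 ∧ ∀ x : ι → ℝ, (∀ i, 0 < x i) → ∀ k,
      maxRatio R (x ᵥ* R ^ k) - minRatio R (x ᵥ* R ^ k) ≤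
        θ ^ k * (maxRatio R x - minRatio R x) := by
  obtain ⟨θ, hθ₀, hθ₁, hcontr⟩ := exists_maxRatio_sub_minRatio_vecMul_le hR
  refine ⟨θ, hθ₀, hθ₁, fun x hx k => ?_⟩
  induction k with
  | zero => simp
  | succ k ih =>
    rw [pow_succ, ← vecMul_vecMul, pow_succ', mul_assoc]
    exact (hcontr _ (vecMul_pow_pos hR hx k)).trans (mul_le_mul_of_nonneg_left ih hθ₀)

theorem exists_tendsto_vecMul_pow_div_pow {x : ι → ℝ} (hx : ∀ i, 0 < x i) :
    ∃ c > 0, ∃ L : ι → ℝ, (∀ i, 0 < L i) ∧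
      ∀ i, Tendsto (fun k => (x ᵥ* R ^ k) i / c ^ k) atTop (𝓝 (L i)) := by
  obtain ⟨θ, hθ₀, hθ₁, hspread⟩ := exists_maxRatio_sub_minRatio_vecMul_pow_le hR
  set y : ℕ → ι → ℝ := fun k => x ᵥ* R ^ k
  set F : ℕ → ℝ := fun k => minRatio R (y k)
  set G : ℕ → ℝ := fun k => maxRatio R (y k)
  have hF := monotone_minRatio_vecMul_pow hR hx
  have hFG := minRatio_vecMul_pow_le_maxRatio hR hx
  have hGF : ∀ k, G k - F k ≤ θ ^ k * (G 0 - F 0) := by simpa [G, F, y] using hspread x hx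
  have hF₀ : 0 < F 0 := (lt_inf'_iff _).2 fun j _ =>
    div_pos (vecMul_pos_of_pos hR (vecMul_pow_pos hR hx 0) j) (vecMul_pow_pos hR hx 0 j)
  -- the Perron root of `R`
  set c := ⨆ k, F k
  have hFc : ∀ k, F k ≤ c := le_ciSup ⟨G 0, Set.forall_mem_range.2 fun k => hFG k 0⟩
  have hcG : ∀ k, c ≤ G k := fun k => ciSup_le fun j => hFG j k
  have hc : 0 < c := hF₀.trans_le (hFc 0)
  have hstep : ∀ i k, |Real.log (y (k + 1) i / c ^ (k + 1) / (y k i / c ^ k))|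
      ≤ (G 0 - F 0) / F 0 * θ ^ k := by
    intro i k
    have hratio : y (k + 1) i / c ^ (k + 1) / (y k i / c ^ k) = (y k ᵥ* R) i / y k i / c := by
      simp only [y, pow_succ, ← vecMul_vecMul]
      field_simp [(vecMul_pow_pos hR hx k i).ne']
    rw [hratio]
    calc _ ≤ (G k - F k) / F k := abs_log_div_le (hF₀.trans_le (hF k.zero_le))
          (ratio_mem_Icc_minRatio_maxRatio R (y k) i) ⟨hFc k, hcG k⟩
      _ ≤ θ ^ k * (G 0 - F 0) / F 0 :=
          div_le_div₀ (mul_nonneg (pow_nonneg hθ₀ k) (sub_nonneg.2 (hFG 0 0))) (hGF k)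
            hF₀ (hF k.zero_le)
      _ = (G 0 - F 0) / F 0 * θ ^ k := by ring
  choose L hL hlim using fun i => exists_pos_tendsto_of_abs_log_div_le
    (fun k => div_pos (vecMul_pow_pos hR hx k i) (pow_pos hc k))
    ((summable_geometric_of_lt_one hθ₀ hθ₁).mul_left ((G 0 - F 0) / F 0)) (hstep i)
  exact ⟨c, hc, L, hL, hlim⟩

theorem exists_tendsto_pow_apply_div_pow (i : ι) :
    ∃ c > 0, ∃ L : ι → ℝ, (∀ j, 0 < L j) ∧
      ∀ j, Tendsto (fun k => (R ^ k) i j / c ^ k) atTop (𝓝 (L j)) := by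
  obtain ⟨c, hc, L, hL, hlim⟩ := exists_tendsto_vecMul_pow_div_pow hR (hR i)
  refine ⟨c, hc, fun j => L j / c, fun j => div_pos (hL j) hc, fun j => ?_⟩
  rw [← tendsto_add_atTop_iff_nat 1]
  refine ((hlim j).div_const c).congr fun k => ?_
  rw [pow_succ', pow_succ, div_div]
  rfl

end Orbit

section Reachable

variable {W : Type*} [Fintype W] [DecidableEq W]

theorem pow_add_apply_pos {A : Matrix W W ℕ} {m n : ℕ} {i j k : W} (h₁ : 0 < (A ^ m) i j)
    (h₂ : 0 < (A ^ n) j k) : 0 < (A ^ (m + n)) i k := by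
  rw [pow_add, mul_apply]
  exact (Nat.mul_pos h₁ h₂).trans_le
    (single_le_sum (f := fun l => (A ^ m) i l * (A ^ n) l k) (fun _ _ => Nat.zero_le _)
      (mem_univ j))

theorem pow_apply_self_pos {A : Matrix W W ℕ} {i : W} (h : 0 < A i i) (n : ℕ) :
    0 < (A ^ n) i i := by
  induction n with
  | zero => simp
  | succ n ih => exact pow_add_apply_pos ih (by rwa [pow_one])

theorem submatrix_pow_of_forall_mem {α : Type*} [Semiring α] (A : Matrix W W α) {C : Finset W}
    (hC : ∀ c ∈ C, ∀ d, A c d ≠ 0 → d ∈ C) (n : ℕ) :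
    (A.submatrix Subtype.val Subtype.val : Matrix C C α) ^ n =
      (A ^ n).submatrix Subtype.val Subtype.val := by
  induction n with
  | zero => simp [submatrix_one _ Subtype.val_injective]
  | succ n ih =>
    ext c d
    simp only [pow_succ', ih, mul_apply, submatrix_apply]
    rw [sum_coe_sort C fun e => A c e * (A ^ n) e d]
    refine sum_subset (subset_univ C) fun e _ he => ?_
    by_contra h
    exact he (hC c c.2 e (left_ne_zero_of_mul h))

noncomputable def reachable (Q : Matrix W W ℕ) (a : W) : Finset W :=
  {c | ∃ k, 0 < (Q ^ k) a c}

variable {Q : Matrix W W ℕ} {a c : W}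

theorem mem_reachable : c ∈ reachable Q a ↔ ∃ k, 0 < (Q ^ k) a c := by
  simp [reachable]

theorem self_mem_reachable : a ∈ reachable Q a :=
  mem_reachable.2 ⟨0, by simp⟩

theorem reachable_closed : ∀ c ∈ reachable Q a, ∀ d, Q c d ≠ 0 → d ∈ reachable Q a :=
  fun _ hc _ hcd =>
    let ⟨k, hk⟩ := mem_reachable.1 hc
    mem_reachable.2 ⟨k + 1, pow_add_apply_pos hk (by rwa [pow_one, Nat.pos_iff_ne_zero])⟩

variable (Q a) in
noncomputable def reachableBlock : Matrix (reachable Q a) (reachable Q a) ℕ :=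
  Q.submatrix Subtype.val Subtype.val

theorem reachableBlock_pow_apply (n : ℕ) (c d : reachable Q a) :
    (reachableBlock Q a ^ n) c d = (Q ^ n) c d := by
  rw [reachableBlock, submatrix_pow_of_forall_mem Q reachable_closed, submatrix_apply]

theorem eventually_pos_reachableBlock_pow (hQa : 0 < Q a a)
    (hret : ∀ c ∈ reachable Q a, ∃ s, 0 < (Q ^ s) c a) :
    ∀ᶠ n in atTop, ∀ c d, 0 < (reachableBlock Q a ^ n) c d := by
  simp only [eventually_all]
  intro c d
  obtain ⟨s, hs⟩ := hret c c.2
  obtain ⟨t, ht⟩ := mem_reachable.1 d.2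
  filter_upwards [eventually_ge_atTop (s + t)] with n hn
  rw [reachableBlock_pow_apply, show n = s + (n - (s + t)) + t by omega]
  exact pow_add_apply_pos (pow_add_apply_pos hs (pow_apply_self_pos hQa _)) ht

theorem exists_pow_apply_pos_of_mem_reachable {M : Matrix W W ℕ} {q : ℕ}
    (hirr : ∀ a b : W, ∃ n : ℕ, 0 < (M ^ n) a b) (hq : 0 < q) (hc : c ∈ reachable (M ^ q) a) :
    ∃ s, 0 < ((M ^ q) ^ s) c a := by
  obtain ⟨l, hl⟩ := mem_reachable.1 hc
  obtain ⟨m, hm⟩ := hirr c a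
  obtain ⟨q, rfl⟩ := Nat.exists_eq_add_one_of_ne_zero hq.ne'
  -- a path `c → a` of length `m`, followed by `q` turns of the loop `a → c → a`
  have hloop : 0 < (M ^ ((q + 1) * l + m)) a a :=
    pow_add_apply_pos (by rwa [← pow_mul] at hl) hm
  have h := pow_add_apply_pos (n := ((q + 1) * l + m) * q) hm
    (by rw [pow_mul]; exact pow_apply_self_pos hloop q)
  refine ⟨q * l + m, ?_⟩
  rw [← pow_mul]
  convert h using 3
  ring

theorem pow_mul_add_apply_eq_sum (M : Matrix W W ℕ) (q n r : ℕ) (a b : W) :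
    (M ^ (q * n + r)) a b =
      ∑ c, (reachableBlock (M ^ q) a ^ n) ⟨a, self_mem_reachable⟩ c * (M ^ r) c b := by
  simp only [reachableBlock_pow_apply]
  rw [pow_add, pow_mul, mul_apply,
    sum_coe_sort (reachable _ a) fun c => ((M ^ q) ^ n) a c * (M ^ r) c b]
  refine (sum_subset (subset_univ _) fun c _ hc => ?_).symm
  by_contra h
  exact hc (mem_reachable.2 ⟨n, Nat.pos_of_ne_zero (left_ne_zero_of_mul h)⟩)

end Reachable

end Matrix

namespace Paper

theorem regularSeq_of_tendsto_div_pow {x : ℕ → ℝ} {q : ℕ} (hq : 0 < q)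
    (h : ∀ r < q, (∀ᶠ k in atTop, x (q * k + r) = 0) ∨
      ∃ c ≥ 1, ∃ γ > 0, Tendsto (fun k => x (q * k + r) / c ^ k) atTop (𝓝 γ)) :
    RegularSeq x :=
  ⟨q, hq, fun r hr => (h r hr).imp_right fun ⟨c, hc, γ, hγ, ht⟩ => ⟨γ, hγ, 0, c, hc, by
    simpa [div_div, mul_comm, div_self hγ.ne'] using ht.div_const γ⟩⟩

open Matrix in
theorem regularSeq_pow_apply_of_pos {W : Type*} [Fintype W] [DecidableEq W]
    {M : Matrix W W ℕ} (hirr : ∀ a b : W, ∃ n : ℕ, 0 < (M ^ n) a b) {a : W} {q : ℕ}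
    (hq : 0 < q) (hqa : 0 < (M ^ q) a a) (b : W) :
    RegularSeq fun n => ((M ^ n) a b : ℝ) := by
  set P := reachableBlock (M ^ q) a
  set a' : reachable (M ^ q) a := ⟨a, self_mem_reachable⟩
  have : Nonempty (reachable (M ^ q) a) := ⟨a'⟩
  obtain ⟨K, hPK, hK⟩ := ((eventually_pos_reachableBlock_pow hqa fun _ hc =>
    exists_pow_apply_pos_of_mem_reachable hirr hq hc).and (eventually_gt_atTop 0)).exists
  obtain ⟨R, hR⟩ : ∃ R : Matrix (reachable (M ^ q) a) (reachable (M ^ q) a) ℝ,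
      ∀ k i j, (R ^ k) i j = (((P ^ K) ^ k) i j : ℝ) :=
    ⟨(P ^ K).map (Nat.castRingHom ℝ), fun k i j => by rw [← Matrix.map_pow]; rfl⟩
  obtain ⟨c, hc, L, hL, hlim⟩ := exists_tendsto_pow_apply_div_pow (R := R)
    (fun i j => by rw [← pow_one R, hR, pow_one]; exact_mod_cast hPK i j) a'
  have hc₁ : 1 ≤ c := one_le_of_tendsto_div_pow (y := fun k => (R ^ k) a' a') hc
    (Eventually.of_forall fun k => by rw [hR]; exact_mod_cast pow_apply_self_pos (hPK a' a') k)
    (hlim a')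
  refine regularSeq_of_tendsto_div_pow (Nat.mul_pos hq hK) fun ρ _ => ?_
  set g : reachable (M ^ q) a → ℕ := fun d => ∑ e, (P ^ (ρ / q)) d e * (M ^ (ρ % q)) e b
  have hN : ∀ k, (M ^ (q * K * k + ρ)) a b = ∑ d, ((P ^ K) ^ k) a' d * g d := by
    intro k
    rw [show q * K * k + ρ = q * (K * k + ρ / q) + ρ % q by
      conv_lhs => rw [← Nat.div_add_mod ρ q]
      ring, pow_mul_add_apply_eq_sum, pow_add, pow_mul]
    simp only [g, mul_apply, sum_mul, mul_sum, mul_assoc]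
    exact sum_comm
  have hx : ∀ k, ((M ^ (q * K * k + ρ)) a b : ℝ) = ∑ d, (R ^ k) a' d * (g d : ℝ) := by
    simp [hN, hR]
  simp_rw [hx]
  exact (tendsto_sum_mul_div_pow_or_eq_zero (y := fun k j => (R ^ k) a' j) hL hlim
    fun _ => Nat.cast_nonneg _).imp Eventually.of_forall fun h => ⟨c, hc₁, h⟩

open Matrix in
theorem regularSeq_pow_apply {W : Type*} [Fintype W] [DecidableEq W] (M : Matrix W W ℕ)
    (hirr : ∀ a b : W, ∃ n : ℕ, 0 < (M ^ n) a b) (a b : W) :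
    RegularSeq fun n => ((M ^ n) a b : ℝ) := by
  by_cases hloop : ∃ q, 0 < q ∧ 0 < (M ^ q) a a
  · obtain ⟨q, hq, hqa⟩ := hloop
    exact regularSeq_pow_apply_of_pos hirr hq hqa b
  -- a nonzero `(M ^ n) a b` with `n ≥ 1` would close a loop at `a` through `b`
  refine regularSeq_of_tendsto_div_pow one_pos fun r _ =>
    Or.inl (eventually_atTop.2 ⟨1, fun k hk => ?_⟩)
  obtain ⟨m, hm⟩ := hirr b a
  by_contra h
  exact hloop ⟨1 * k + r + m, by omega,
    pow_add_apply_pos (Nat.pos_of_ne_zero (by exact_mod_cast h)) hm⟩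

section Graph

variable {V E : Type*} (src tgt : E → V)

theorem isPath_zero_iff {u v : V} (p : Fin 0 → E) : IsPath src tgt u v p ↔ u = v :=
  ⟨fun h => h.2.2 rfl, fun h => ⟨fun _ hi => absurd hi (by omega),
    fun h0 => absurd h0 (lt_irrefl 0), fun _ => h⟩⟩

theorem isPath_succ_iff {u v : V} {n : ℕ} (p : Fin (n + 1) → E) :
    IsPath src tgt u v p ↔ src (p 0) = u ∧ IsPath src tgt (tgt (p 0)) v (Fin.tail p) := by
  constructor
  · rintro ⟨hchain, hends, -⟩
    refine ⟨(hends n.succ_pos).1, fun i hi => hchain (i + 1) (by omega),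
      fun hn => ⟨(hchain 0 (by omega)).symm, ?_⟩, fun hn => ?_⟩
    · convert (hends n.succ_pos).2 using 2
      exact congrArg p (Fin.ext (by simp only [Fin.val_succ]; omega))
    · subst hn
      exact (hends one_pos).2
  · rintro ⟨hsrc, hchain, hends, hnil⟩
    refine ⟨fun i hi => ?_, fun _ => ⟨hsrc, ?_⟩, fun h => absurd h n.succ_ne_zero⟩
    · cases i with
      | zero => exact (hends (by omega)).1.symm
      | succ i => exact hchain i (by omega)
    · rcases n with _ | n
      · exact hnil rfl
      · exact (hends n.succ_pos).2

def pathsSuccEquiv (u v : V) (n : ℕ) :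
    {p : Fin (n + 1) → E // IsPath src tgt u v p} ≃
      Σ e : {e : E // src e = u}, {p : Fin n → E // IsPath src tgt (tgt e) v p} where
  toFun p := ⟨⟨p.1 0, ((isPath_succ_iff src tgt p.1).1 p.2).1⟩,
    ⟨Fin.tail p.1, ((isPath_succ_iff src tgt p.1).1 p.2).2⟩⟩
  invFun x := ⟨Fin.cons x.1.1 x.2.1, (isPath_succ_iff src tgt _).2 ⟨x.1.2, x.2.2⟩⟩
  left_inv p := Subtype.ext (Fin.cons_self_tail p.1)
  right_inv _ := rfl

variable [Fintype E] [DecidableEq V]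

theorem numPaths_succ (u v : V) (n : ℕ) :
    numPaths src tgt u v (n + 1) = ∑ e with src e = u, numPaths src tgt (tgt e) v n := by
  rw [numPaths, Fintype.card_congr (pathsSuccEquiv src tgt u v n), Fintype.card_sigma]
  exact (sum_subtype _ (fun e => by simp) fun e => numPaths src tgt (tgt e) v n).symm

noncomputable def adjMatrix : Matrix V V ℕ :=
  Matrix.of fun u w => #{e | src e = u ∧ tgt e = w}

variable [Fintype V]

theorem adjMatrix_mul_apply (A : Matrix V V ℕ) (u v : V) :
    (adjMatrix src tgt * A) u v = ∑ e with src e = u, A (tgt e) v := by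
  simp only [adjMatrix, Matrix.mul_apply, Matrix.of_apply, card_filter, sum_mul, ite_mul,
    one_mul, zero_mul]
  rw [sum_comm, sum_filter]
  refine sum_congr rfl fun e _ => ?_
  by_cases h : src e = u <;> simp [h]

theorem numPaths_eq_adjMatrix_pow_apply (n : ℕ) (u v : V) :
    numPaths src tgt u v n = (adjMatrix src tgt ^ n) u v := by
  induction n generalizing u with
  | zero =>
    by_cases h : u = v <;> simp [numPaths, isPath_zero_iff, h]
  | succ n ih => simp only [numPaths_succ, pow_succ', adjMatrix_mul_apply, ih]

end Graph

end Paper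

open Paper in
/-- **Theorem (regularity of path counts in strongly connected graphs).**
If a finite directed graph is strongly connected (for any two vertices `u, v` there is a
path from `u` to `v`), then for any vertices `u, v` the sequence `{#L^G_{u,v,n}}ₙ` of
path counts is regular.  Equivalently, for an irreducible square matrix `M` with
nonnegative integer entries, every entry sequence `{(Mⁿ)_{u,v}}ₙ` is regular. -/
theorem strongly_connected_path_counts_regular
    {V E : Type*} [Fintype V] [Fintype E] (src tgt : E → V)
    (hconn : ∀ u v : V, ∃ (n : ℕ) (p : Fin n → E), IsPath src tgt u v p)
    (u v : V)
    {W : Type*} [Fintype W] [DecidableEq W] (M : Matrix W W ℕ)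
    (hirr : ∀ a b : W, ∃ n : ℕ, 0 < (M ^ n) a b) (a b : W) :
    RegularSeq (fun n => (numPaths src tgt u v n : ℝ)) ∧
      RegularSeq (fun n => ((M ^ n) a b : ℝ)) := by
  refine ⟨?_, regularSeq_pow_apply M hirr a b⟩
  have hirr_adj : ∀ u v : V, ∃ n, 0 < (adjMatrix src tgt ^ n) u v := fun u v =>
    let ⟨n, p, hp⟩ := hconn u v
    ⟨n, numPaths_eq_adjMatrix_pow_apply src tgt n u v ▸ Fintype.card_pos_iff.2 ⟨⟨p, hp⟩⟩⟩
  simpa only [numPaths_eq_adjMatrix_pow_apply] using regularSeq_pow_apply _ hirr_adj u v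
end

section
/- Let (X,ν) be a probability space, let {F_n} be a pre-convergent sequence of operators in the class B+, and let A ∈ B+. Then the sequences {A F_n}_n and {F_n A}_n are pre-convergent. -/
/-!
Composing on the right is harmless: the normalized Cesàro averages of `Fₙ ∘ A` at `φ` are those
of `Fₙ` at `P(A) φ = λ(A)⁻¹ A φ`, and `P(A)` maps each `Lᵖ` into itself. Composing on the left,
the averages become `P(A) (Cₙ φ)`, where `Cₙ` are the averages of `Fₙ`; since `P(A)` is an
`Lᵖ`-contraction, `Lᵖ` convergence passes through it. For a.e. convergence, `P(A)` is a positive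
bounded operator on `L¹`: the `L¹` limit `g` of `Cₙ φ` is also its a.e. limit (compare along an a.e.
convergent subsequence), and the tail suprema `S_M = sup_{N ≥ M} |C_N φ - g|`, bounded by
`2 ‖φ‖_∞`, tend to `0` in `L¹` by dominated convergence. Positivity gives
`|P(A) C_N φ - P(A) g| ≤ P(A) S_M` for `N ≥ M`, and `P(A) S_M → 0` in `L¹` forces
`inf_M P(A) S_M = 0` a.e. Finally `λ(A) ≥ 0`, so `λ(A) λ(Fₙ)` stays regular.
-/

open MeasureTheory Filter ENNReal

namespace Paper

variable {X : Type*} [MeasurableSpace X] (ν : MeasureTheory.Measure X)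

/-- The constant function `1` as an element of `L¹(X,ν)`. -/
noncomputable def oneL [IsFiniteMeasure ν] : Lp ℝ 1 ν :=
  (memLp_const (1 : ℝ)).toLp (fun _ => (1 : ℝ))

/-- The class `B⁺` of operators on `L¹(X,ν)`: `A` maps the constant function `1`
to `lam • 1`, is positivity-preserving, maps each `L^p` into itself and satisfies
`‖A f‖_p ≤ lam * ‖f‖_p` for all `p ∈ [1,∞]`. -/
def InBPlus [IsFiniteMeasure ν] (A : Lp ℝ 1 ν →ₗ[ℝ] Lp ℝ 1 ν) (lam : ℝ) : Prop :=
  A (oneL ν) = lam • oneL ν ∧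
  (∀ f : Lp ℝ 1 ν, 0 ≤ f → 0 ≤ A f) ∧
  (∀ (p : ℝ≥0∞), 1 ≤ p → ∀ f : Lp ℝ 1 ν, MemLp (⇑f) p ν →
    MemLp (⇑(A f)) p ν ∧
    eLpNorm (⇑(A f)) p ν ≤ ENNReal.ofReal lam * eLpNorm (⇑f) p ν)

/-- Cesàro averages `(1/N) ∑_{n<N} T n` of a sequence of operators. -/
noncomputable def cesaro (T : ℕ → (Lp ℝ 1 ν →ₗ[ℝ] Lp ℝ 1 ν)) (N : ℕ) :
    Lp ℝ 1 ν →ₗ[ℝ] Lp ℝ 1 ν :=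
  (N : ℝ)⁻¹ • ∑ n ∈ Finset.range N, T n

/-- A sequence of nonnegative reals is regular if, along each arithmetic progression
modulo some `q ≥ 1`, it is either eventually zero or asymptotic to `a k^b c^k`
with `a > 0`, `b ∈ ℕ`, `c ≥ 1`. -/
def IsRegular (x : ℕ → ℝ) : Prop :=
  ∃ q : ℕ, 0 < q ∧ ∀ r : ℕ, r < q →
    (∀ᶠ k in atTop, x (q * k + r) = 0) ∨
    (∃ a : ℝ, 0 < a ∧ ∃ b : ℕ, ∃ c : ℝ, 1 ≤ c ∧
      Tendsto (fun k : ℕ => x (q * k + r) / (a * (k : ℝ) ^ b * c ^ k)) atTop (nhds 1))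

/-- A sequence `T n` of operators of class `B⁺` with `λ(T n) = lam n` is pre-convergent if
`lam` is regular, and the Cesàro averages of the normalized operators `P(T n) = T n / lam n`
applied to `φ` converge in `L^p` for `φ ∈ L^p` (`1 ≤ p < ∞`) and ν-a.e. for `φ ∈ L^∞`.
(For `T n ≠ 0` one has `lam n ≠ 0` and `(lam n)⁻¹ • T n = P(T n)`; for `T n = 0`,
`lam n = 0` and `(lam n)⁻¹ • T n = 0 = P(0)`.) -/
def PreConvergent [IsFiniteMeasure ν] (T : ℕ → (Lp ℝ 1 ν →ₗ[ℝ] Lp ℝ 1 ν)) (lam : ℕ → ℝ) : Prop :=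
  IsRegular lam ∧
  (∀ (p : ℝ≥0∞), 1 ≤ p → p ≠ ∞ → ∀ φ : Lp ℝ 1 ν, MemLp (⇑φ) p ν →
    ∃ g : X → ℝ, MemLp g p ν ∧
      Tendsto
        (fun N => eLpNorm (fun x => (cesaro ν (fun n => (lam n)⁻¹ • T n) N φ) x - g x) p ν)
        atTop (nhds 0)) ∧
  (∀ φ : Lp ℝ 1 ν, MemLp (⇑φ) ∞ ν →
    ∀ᵐ x ∂ν, ∃ L : ℝ,
      Tendsto (fun N => (cesaro ν (fun n => (lam n)⁻¹ • T n) N φ) x) atTop (nhds L))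

end Paper

open MeasureTheory Filter ENNReal Topology

theorem MeasureTheory.TendstoInMeasure.ae_tendsto_of_ae_exists_tendsto
    {X E : Type*} [MeasurableSpace X] {ν : Measure X} [MetricSpace E]
    {f : ℕ → X → E} {g : X → E} (hfg : TendstoInMeasure ν f atTop g)
    (hconv : ∀ᵐ x ∂ν, ∃ L, Tendsto (fun n => f n x) atTop (𝓝 L)) :
    ∀ᵐ x ∂ν, Tendsto (fun n => f n x) atTop (𝓝 (g x)) := by
  obtain ⟨ns, hns, hsub⟩ := hfg.exists_seq_tendsto_ae
  filter_upwards [hconv, hsub] with x ⟨L, hL⟩ hx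
  rwa [tendsto_nhds_unique hx (hL.comp hns.tendsto_atTop)]

namespace Paper

lemma tendsto_iSup_add_nhds_zero {u : ℕ → ℝ≥0∞} (hu : Tendsto u atTop (𝓝 0)) :
    Tendsto (fun M => ⨆ N, u (M + N)) atTop (𝓝 0) := by
  rw [ENNReal.tendsto_nhds_zero] at hu ⊢
  intro ε hε
  obtain ⟨M₀, hM₀⟩ := (hu ε hε).exists_forall_of_atTop
  filter_upwards [eventually_ge_atTop M₀] with M hM
  exact iSup_le fun N => hM₀ _ (hM.trans (Nat.le_add_right M N))

lemma abs_map_le_of_abs_le {E F 𝓕 : Type*} [AddCommGroup E] [Lattice E] [IsOrderedAddMonoid E]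
    [AddCommGroup F] [Lattice F] [FunLike 𝓕 E F] [AddMonoidHomClass 𝓕 E F]
    {A : 𝓕} (hA : Monotone A) {f s : E} (h : |f| ≤ s) : |A f| ≤ A s := by
  rw [abs_le'] at h ⊢
  exact ⟨hA h.1, by simpa only [map_neg] using hA h.2⟩

section Convergence

variable {X : Type*} [MeasurableSpace X] {ν : Measure X}

lemma ae_tendsto_zero_of_abs_le_of_tendsto {w : ℕ → X → ℝ} {v : ℕ → Lp ℝ 1 ν}
    (hv : Tendsto v atTop (𝓝 0)) (hwv : ∀ᵐ x ∂ν, ∀ M N, |w (M + N) x| ≤ v M x) :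
    ∀ᵐ x ∂ν, Tendsto (fun N => w N x) atTop (𝓝 0) := by
  set H : X → ℝ≥0∞ := fun x => ⨅ M, ‖v M x‖ₑ
  have hv' : Tendsto (fun M => eLpNorm (v M) 1 ν) atTop (𝓝 0) := by
    simpa [Lp.enorm_def] using hv.enorm
  have hH : ∫⁻ x, H x ∂ν = 0 := by
    refine le_antisymm (ge_of_tendsto' hv' fun M => ?_) bot_le
    rw [eLpNorm_one_eq_lintegral_enorm]
    exact lintegral_mono fun x => iInf_le _ M
  have hH0 : ∀ᵐ x ∂ν, H x = 0 :=
    (lintegral_eq_zero_iff' (AEMeasurable.iInf fun M => (Lp.aestronglyMeasurable (v M)).enorm)).1 hH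
  filter_upwards [hwv, hH0] with x hx hHx
  rw [Metric.tendsto_atTop]
  intro ε hε
  obtain ⟨M, hM⟩ := iInf_lt_iff.1 (hHx.trans_lt (ENNReal.ofReal_pos.2 hε))
  refine ⟨M, fun N hN => ?_⟩
  obtain ⟨K, rfl⟩ := Nat.exists_eq_add_of_le hN
  rw [← ofReal_norm, ENNReal.ofReal_lt_ofReal_iff hε] at hM
  rw [Real.dist_eq, sub_zero]
  exact (hx M K).trans_lt ((le_abs_self _).trans_lt hM)

lemma exists_tendsto_zero_forall_abs_sub_le {f : ℕ → X → ℝ} {g h : X → ℝ}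
    (hf : ∀ n, AEStronglyMeasurable (f n) ν) (hh : Integrable h ν)
    (hbound : ∀ n, ∀ᵐ x ∂ν, ‖f n x‖ ≤ h x)
    (hfg : ∀ᵐ x ∂ν, Tendsto (fun n => f n x) atTop (𝓝 (g x))) :
    ∃ S : ℕ → Lp ℝ 1 ν, Tendsto S atTop (𝓝 0) ∧
      ∀ᵐ x ∂ν, ∀ M N, |f (M + N) x - g x| ≤ S M x := by
  set W : ℕ → X → ℝ≥0∞ := fun M x => ⨆ N, ‖f (M + N) x - g x‖ₑ
  have hW : ∀ M, AEMeasurable (W M) ν := fun M =>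
    AEMeasurable.iSup fun N => ((hf _).sub (aestronglyMeasurable_of_tendsto_ae _ hf hfg)).enorm
  have hWh : ∀ᵐ x ∂ν, ∀ M, W M x ≤ ENNReal.ofReal (2 * h x) := by
    have hgh : ∀ᵐ x ∂ν, ‖g x‖ ≤ h x := by
      filter_upwards [ae_all_iff.2 hbound, hfg] with x hfx hx
      exact le_of_tendsto' hx.norm hfx
    filter_upwards [ae_all_iff.2 hbound, hgh] with x hfx hgx M
    refine iSup_le fun N => ?_
    rw [← ofReal_norm]
    exact ENNReal.ofReal_le_ofReal ((norm_sub_le _ _).trans (by linarith [hfx (M + N)]))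
  have hW0 : ∀ᵐ x ∂ν, Tendsto (fun M => W M x) atTop (𝓝 0) := by
    filter_upwards [hfg] with x hx
    exact tendsto_iSup_add_nhds_zero (by simpa using (hx.sub_const (g x)).enorm)
  have hWfin : ∀ᵐ x ∂ν, ∀ M, W M x ≠ ∞ := by
    filter_upwards [hWh] with x hx M using ne_top_of_le_ne_top ofReal_ne_top (hx M)
  have hs : ∀ M, MemLp (fun x => (W M x).toReal) 1 ν := by
    refine fun M => memLp_one_iff_integrable.2 <|
      (hh.const_mul 2).mono' (hW M).ennreal_toReal.aestronglyMeasurable ?_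
    filter_upwards [hWh, hbound 0] with x hx h0
    rw [Real.norm_of_nonneg toReal_nonneg]
    exact ENNReal.toReal_le_of_le_ofReal (by linarith [norm_nonneg (f 0 x)]) (hx M)
  refine ⟨fun M => (hs M).toLp _, ?_, ?_⟩
  · rw [Lp.tendsto_Lp_iff_tendsto_eLpNorm']
    have hlint : Tendsto (fun M => ∫⁻ x, W M x ∂ν) atTop (𝓝 0) := by
      simpa using tendsto_lintegral_of_dominated_convergence' _ hW
        (fun M => hWh.mono fun x hx => hx M) (hh.const_mul 2).lintegral_lt_top.ne hW0
    refine hlint.congr fun M => ?_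
    show _ = eLpNorm _ 1 ν
    rw [eLpNorm_congr_ae ((hs M).coeFn_toLp.sub (Lp.coeFn_zero ℝ 1 ν)), sub_zero,
      eLpNorm_one_eq_lintegral_enorm]
    exact lintegral_congr_ae (hWfin.mono fun x hx => (Real.enorm_toReal (hx M)).symm)
  · filter_upwards [ae_all_iff.2 fun M => (hs M).coeFn_toLp, hWfin] with x hS hx M N
    rw [hS M, ← Real.norm_eq_abs, ← toReal_enorm]
    exact ENNReal.toReal_mono (hx M) (le_iSup (fun N => ‖f (M + N) x - g x‖ₑ) N)

theorem ae_tendsto_map_of_dominated {A : Lp ℝ 1 ν →ₗ[ℝ] Lp ℝ 1 ν} (hAc : Continuous A)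
    (hAm : Monotone A) {C : ℕ → Lp ℝ 1 ν} {G : Lp ℝ 1 ν} {h : X → ℝ} (hh : Integrable h ν)
    (hbound : ∀ n, ∀ᵐ x ∂ν, ‖C n x‖ ≤ h x)
    (hCG : ∀ᵐ x ∂ν, Tendsto (fun n => C n x) atTop (𝓝 (G x))) :
    ∀ᵐ x ∂ν, Tendsto (fun n => A (C n) x) atTop (𝓝 (A G x)) := by
  obtain ⟨S, hS, hCS⟩ := exists_tendsto_zero_forall_abs_sub_le
    (fun n => Lp.aestronglyMeasurable (C n)) hh hbound hCG
  have hAS : Tendsto (fun M => A (S M)) atTop (𝓝 0) := by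
    simpa only [Function.comp_def, map_zero] using (hAc.tendsto 0).comp hS
  have hdom : ∀ᵐ x ∂ν, ∀ M N, |A (C (M + N)) x - A G x| ≤ A (S M) x := by
    refine ae_all_iff.2 fun M => ae_all_iff.2 fun N => ?_
    have hle : |C (M + N) - G| ≤ S M := by
      rw [← Lp.coeFn_le]
      filter_upwards [Lp.coeFn_abs (C (M + N) - G), Lp.coeFn_sub (C (M + N)) G, hCS]
        with x h1 h2 h3
      rw [h1, h2]
      exact h3 M N
    have hAle := abs_map_le_of_abs_le hAm hle
    rw [← Lp.coeFn_le, map_sub] at hAle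
    filter_upwards [hAle, Lp.coeFn_abs (A (C (M + N)) - A G),
      Lp.coeFn_sub (A (C (M + N))) (A G)] with x h1 h2 h3
    rwa [h2, h3] at h1
  filter_upwards [ae_tendsto_zero_of_abs_le_of_tendsto (w := fun N x => A (C N) x - A G x) hAS hdom]
    with x hx
  simpa using hx.add_const (A G x)

end Convergence

section BPlus

variable {X : Type*} [MeasurableSpace X] {ν : Measure X} [IsFiniteMeasure ν]
  {A B : Lp ℝ 1 ν →ₗ[ℝ] Lp ℝ 1 ν} {a b : ℝ}

lemma coeFn_oneL : ⇑(oneL ν) =ᵐ[ν] 1 :=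
  MemLp.coeFn_toLp _

lemma InBPlus.nonneg [NeZero ν] (hA : InBPlus ν A a) : 0 ≤ a := by
  have hone : 0 ≤ oneL ν := by
    rw [← Lp.coeFn_nonneg]
    filter_upwards [coeFn_oneL] with x hx
    simp [hx]
  have h := hA.2.1 _ hone
  rw [hA.1, ← Lp.coeFn_nonneg] at h
  obtain ⟨x, hx, hsmul, hone⟩ := (h.and ((Lp.coeFn_smul a (oneL ν)).and coeFn_oneL)).exists
  simpa [hsmul, hone] using hx

lemma InBPlus.monotone (hA : InBPlus ν A a) : Monotone A := fun f g hfg => by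
  simpa using hA.2.1 (g - f) (sub_nonneg.2 hfg)

lemma InBPlus.continuous (hA : InBPlus ν A a) : Continuous A := by
  -- `max a 0` rather than `a`: for `ν = 0` the class allows `a < 0`.
  refine AddMonoidHomClass.continuous_of_bound A (max a 0) fun f => ?_
  have h := ENNReal.toReal_mono (mul_ne_top ofReal_ne_top (Lp.eLpNorm_ne_top f))
    (hA.2.2 1 le_rfl f (Lp.memLp f)).2
  rwa [toReal_mul, toReal_ofReal', ← Lp.norm_def, ← Lp.norm_def] at h

lemma InBPlus.smul (hA : InBPlus ν A a) {c : ℝ} (hc : 0 ≤ c) : InBPlus ν (c • A) (c * a) := by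
  refine ⟨by rw [LinearMap.smul_apply, hA.1, smul_smul], fun f hf => ?_, fun p hp f hf => ?_⟩
  · rw [LinearMap.smul_apply, ← Lp.coeFn_nonneg]
    filter_upwards [Lp.coeFn_smul c (A f), (Lp.coeFn_nonneg _).2 (hA.2.1 f hf)] with x hx hAx
    simpa [hx] using mul_nonneg hc hAx
  · obtain ⟨hAf, hle⟩ := hA.2.2 p hp f hf
    have hsmul : eLpNorm ((c • A) f) p ν = ENNReal.ofReal c * eLpNorm (A f) p ν := by
      rw [LinearMap.smul_apply, eLpNorm_congr_ae (Lp.coeFn_smul _ _), eLpNorm_const_smul,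
        Real.enorm_of_nonneg hc]
    refine ⟨⟨Lp.aestronglyMeasurable _, ?_⟩, ?_⟩
    · rw [hsmul]
      exact mul_lt_top ofReal_lt_top hAf.2
    · rw [hsmul, ENNReal.ofReal_mul hc, mul_assoc]
      gcongr

lemma InBPlus.comp (hA : InBPlus ν A a) (hB : InBPlus ν B b) : InBPlus ν (A ∘ₗ B) (a * b) := by
  refine ⟨?_, fun f hf => hA.2.1 _ (hB.2.1 f hf), fun p hp f hf => ?_⟩
  · rw [LinearMap.comp_apply, hB.1, map_smul, hA.1, smul_smul, mul_comm]
  · obtain ⟨hBf, hBle⟩ := hB.2.2 p hp f hf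
    obtain ⟨hABf, hABle⟩ := hA.2.2 p hp (B f) hBf
    refine ⟨hABf, hABle.trans ?_⟩
    rcases le_total 0 a with ha | ha
    · rw [ENNReal.ofReal_mul ha, mul_assoc]
      gcongr
    · simp [ENNReal.ofReal_of_nonpos ha]

lemma InBPlus.eLpNorm_inv_smul_apply_le [NeZero ν] (hA : InBPlus ν A a) {p : ℝ≥0∞} (hp : 1 ≤ p)
    {f : Lp ℝ 1 ν} (hf : MemLp f p ν) : eLpNorm ((a⁻¹ • A) f) p ν ≤ eLpNorm f p ν :=
  -- `a⁻¹ * a ≤ 1` holds also for `a = 0`, where `0⁻¹ = 0` and `P(A) = 0`.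
  ((hA.smul (inv_nonneg.2 hA.nonneg)).2.2 p hp f hf).2.trans <|
    mul_le_of_le_one_left' (ENNReal.ofReal_le_one.2 inv_mul_le_one)

lemma InBPlus.memLp_inv_smul_apply [NeZero ν] (hA : InBPlus ν A a) {p : ℝ≥0∞} (hp : 1 ≤ p)
    {f : Lp ℝ 1 ν} (hf : MemLp f p ν) : MemLp ((a⁻¹ • A) f) p ν :=
  ⟨Lp.aestronglyMeasurable _, (hA.eLpNorm_inv_smul_apply_le hp hf).trans_lt hf.2⟩

lemma InBPlus.eLpNorm_inv_smul_apply_sub_le [NeZero ν] (hA : InBPlus ν A a) {p : ℝ≥0∞} (hp : 1 ≤ p)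
    {f g : Lp ℝ 1 ν} (hf : MemLp f p ν) (hg : MemLp g p ν) :
    eLpNorm (fun x => (a⁻¹ • A) f x - (a⁻¹ • A) g x) p ν ≤ eLpNorm (fun x => f x - g x) p ν := by
  have hsub : ∀ u v : Lp ℝ 1 ν, (fun x => u x - v x) =ᵐ[ν] ⇑(u - v) :=
    fun u v => (Lp.coeFn_sub u v).symm
  rw [eLpNorm_congr_ae (hsub _ _), eLpNorm_congr_ae (hsub f g), ← map_sub]
  exact hA.eLpNorm_inv_smul_apply_le hp ((hf.sub hg).ae_eq (hsub f g))

end BPlus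

lemma IsRegular.const_mul {x : ℕ → ℝ} (hx : IsRegular x) {c : ℝ} (hc : 0 ≤ c) :
    IsRegular (fun n => c * x n) := by
  obtain ⟨q, hq, hreg⟩ := hx
  refine ⟨q, hq, fun r hr => ?_⟩
  rcases hc.eq_or_lt with rfl | hc
  · exact Or.inl (Eventually.of_forall fun k => zero_mul _)
  rcases hreg r hr with hzero | ⟨a, ha, b, d, hd, hlim⟩
  · exact Or.inl (hzero.mono fun k hk => by simp [hk])
  · refine Or.inr ⟨c * a, mul_pos hc ha, b, d, hd, hlim.congr fun k => ?_⟩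
    rw [mul_assoc c, mul_assoc c, mul_div_mul_left _ _ hc.ne']

section Cesaro

variable {X : Type*} [MeasurableSpace X] {ν : Measure X}

lemma cesaro_inv_smul_comp_left (A : Lp ℝ 1 ν →ₗ[ℝ] Lp ℝ 1 ν)
    (T : ℕ → (Lp ℝ 1 ν →ₗ[ℝ] Lp ℝ 1 ν)) (a : ℝ) (lam : ℕ → ℝ) (N : ℕ) :
    cesaro ν (fun n => (a * lam n)⁻¹ • (A ∘ₗ T n)) N =
      (a⁻¹ • A) ∘ₗ cesaro ν (fun n => (lam n)⁻¹ • T n) N := by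
  ext1 φ
  simp only [cesaro, LinearMap.smul_apply, LinearMap.comp_apply, LinearMap.sum_apply, map_smul,
    map_sum, Finset.smul_sum, smul_smul]
  congr! 2
  ring

lemma cesaro_inv_smul_comp_right (A : Lp ℝ 1 ν →ₗ[ℝ] Lp ℝ 1 ν)
    (T : ℕ → (Lp ℝ 1 ν →ₗ[ℝ] Lp ℝ 1 ν)) (a : ℝ) (lam : ℕ → ℝ) (N : ℕ) :
    cesaro ν (fun n => (lam n * a)⁻¹ • (T n ∘ₗ A)) N =
      cesaro ν (fun n => (lam n)⁻¹ • T n) N ∘ₗ (a⁻¹ • A) := by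
  ext1 φ
  simp only [cesaro, LinearMap.smul_apply, LinearMap.comp_apply, LinearMap.sum_apply, map_smul,
    Finset.smul_sum, smul_smul]
  congr! 2
  ring

lemma eLpNorm_cesaro_apply_le {p : ℝ≥0∞} (hp : 1 ≤ p) (T : ℕ → (Lp ℝ 1 ν →ₗ[ℝ] Lp ℝ 1 ν))
    (φ : Lp ℝ 1 ν) {K : ℝ≥0∞} (hT : ∀ n, eLpNorm (T n φ) p ν ≤ K) (N : ℕ) :
    eLpNorm (cesaro ν T N φ) p ν ≤ K :=
  calc eLpNorm (cesaro ν T N φ) p ν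
      = ‖(N : ℝ)⁻¹‖ₑ * eLpNorm (∑ n ∈ Finset.range N, ⇑(T n φ)) p ν := by
        rw [cesaro, LinearMap.smul_apply, eLpNorm_congr_ae (Lp.coeFn_smul _ _),
          eLpNorm_const_smul, LinearMap.sum_apply, eLpNorm_congr_ae (Lp.coeFn_finsetSum _ _)]
    _ ≤ ‖(N : ℝ)⁻¹‖ₑ * ∑ n ∈ Finset.range N, eLpNorm (T n φ) p ν := by
        gcongr
        exact eLpNorm_sum_le (fun n _ => Lp.aestronglyMeasurable _) hp
    _ ≤ ‖(N : ℝ)⁻¹‖ₑ * (N * K) := by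
        gcongr
        simpa using Finset.sum_le_card_nsmul (Finset.range N) _ _ fun n _ => hT n
    _ = ‖(N : ℝ)⁻¹ * N‖ₑ * K := by rw [enorm_mul, mul_assoc, Real.enorm_natCast]
    _ ≤ K := mul_le_of_le_one_left' <| by
        rw [Real.enorm_of_nonneg (by positivity)]
        exact ofReal_le_one.2 inv_mul_le_one

end Cesaro

section PreConvergent

variable {X : Type*} [MeasurableSpace X] {ν : Measure X} [IsFiniteMeasure ν] [NeZero ν]
  {F : ℕ → (Lp ℝ 1 ν →ₗ[ℝ] Lp ℝ 1 ν)} {lamF : ℕ → ℝ} {A : Lp ℝ 1 ν →ₗ[ℝ] Lp ℝ 1 ν} {a : ℝ}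

theorem PreConvergent.comp_right (hF : PreConvergent ν F lamF) (hA : InBPlus ν A a) :
    PreConvergent ν (fun n => F n ∘ₗ A) (fun n => lamF n * a) := by
  simp only [PreConvergent, cesaro_inv_smul_comp_right, LinearMap.comp_apply]
  refine ⟨by simpa only [mul_comm] using hF.1.const_mul hA.nonneg,
    fun p hp hp' φ hφ => hF.2.1 p hp hp' _ (hA.memLp_inv_smul_apply hp hφ),
    fun φ hφ => hF.2.2 _ (hA.memLp_inv_smul_apply le_top hφ)⟩

theorem PreConvergent.comp_left (hFB : ∀ n, InBPlus ν (F n) (lamF n))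
    (hF : PreConvergent ν F lamF) (hA : InBPlus ν A a) :
    PreConvergent ν (fun n => A ∘ₗ F n) (fun n => a * lamF n) := by
  set C := cesaro ν (fun n => (lamF n)⁻¹ • F n)
  have hC : ∀ {p}, 1 ≤ p → ∀ {φ : Lp ℝ 1 ν}, MemLp φ p ν → ∀ N,
      eLpNorm (C N φ) p ν ≤ eLpNorm φ p ν := fun hp φ hφ =>
    eLpNorm_cesaro_apply_le hp _ φ fun n => (hFB n).eLpNorm_inv_smul_apply_le hp hφ
  simp only [PreConvergent, cesaro_inv_smul_comp_left, LinearMap.comp_apply]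
  refine ⟨hF.1.const_mul hA.nonneg, fun p hp hp' φ hφ => ?_, fun φ hφ => ?_⟩
  · obtain ⟨g, hg, hCg⟩ := hF.2.1 p hp hp' φ hφ
    have hG := (hg.mono_exponent hp).coeFn_toLp
    refine ⟨(a⁻¹ • A) ((hg.mono_exponent hp).toLp g),
      hA.memLp_inv_smul_apply hp (hg.ae_eq hG.symm), ?_⟩
    refine tendsto_of_tendsto_of_tendsto_of_le_of_le tendsto_const_nhds hCg (fun _ => zero_le)
      fun N => ?_
    have hCN : MemLp (C N φ) p ν := ⟨Lp.aestronglyMeasurable _, (hC hp hφ N).trans_lt hφ.2⟩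
    refine (hA.eLpNorm_inv_smul_apply_sub_le hp hCN (hg.ae_eq hG.symm)).trans_eq ?_
    exact eLpNorm_congr_ae ((EventuallyEq.refl _ _).sub hG)
  · obtain ⟨g, hg, hCg⟩ := hF.2.1 1 le_rfl one_ne_top φ (Lp.memLp φ)
    have hCG : ∀ᵐ x ∂ν, Tendsto (fun N => C N φ x) atTop (𝓝 (hg.toLp g x)) := by
      filter_upwards [(tendstoInMeasure_of_tendsto_eLpNorm one_ne_zero
        (fun N => Lp.aestronglyMeasurable _) hg.1 hCg).ae_tendsto_of_ae_exists_tendsto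
        (hF.2.2 φ hφ), hg.coeFn_toLp] with x hx hGx
      rwa [hGx]
    have hbound : ∀ N, ∀ᵐ x ∂ν, ‖C N φ x‖ ≤ lpNorm φ ∞ ν := fun N => by
      have hN := hC le_top hφ N
      have hle : lpNorm (C N φ) ∞ ν ≤ lpNorm φ ∞ ν := by
        rw [← toReal_eLpNorm hφ.1, ← toReal_eLpNorm (Lp.aestronglyMeasurable _)]
        exact toReal_mono hφ.2.ne hN
      filter_upwards [ae_le_lpNorm_exponent_top ⟨Lp.aestronglyMeasurable _, hN.trans_lt hφ.2⟩]
        with x hx using hx.trans hle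
    have hP := hA.smul (inv_nonneg.2 hA.nonneg)
    filter_upwards [ae_tendsto_map_of_dominated hP.continuous hP.monotone (integrable_const _)
      hbound hCG] with x hx
    exact ⟨_, hx⟩

end PreConvergent

end Paper

open Paper MeasureTheory Filter in
/-- **Lemma (multiplication by a fixed `B⁺` operator preserves pre-convergence).**
If `{Fₙ}` is a pre-convergent sequence of operators of class `B⁺` and `A ∈ B⁺`,
then the sequences `{A Fₙ}` and `{Fₙ A}` (with `λ(A Fₙ) = λ(Fₙ A) = λ(A)·λ(Fₙ)`)
are pre-convergent sequences of operators of class `B⁺`. -/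
theorem preconvergent_mul_const
    {X : Type*} [MeasurableSpace X] (ν : MeasureTheory.Measure X) [IsProbabilityMeasure ν]
    (F : ℕ → (Lp ℝ 1 ν →ₗ[ℝ] Lp ℝ 1 ν)) (lamF : ℕ → ℝ)
    (hF : ∀ n, InBPlus ν (F n) (lamF n))
    (hFpre : PreConvergent ν F lamF)
    (A : Lp ℝ 1 ν →ₗ[ℝ] Lp ℝ 1 ν) (lamA : ℝ) (hA : InBPlus ν A lamA) :
    ((∀ n, InBPlus ν (A ∘ₗ F n) (lamA * lamF n)) ∧
      PreConvergent ν (fun n => A ∘ₗ F n) (fun n => lamA * lamF n)) ∧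
    ((∀ n, InBPlus ν (F n ∘ₗ A) (lamF n * lamA)) ∧
      PreConvergent ν (fun n => F n ∘ₗ A) (fun n => lamF n * lamA)) :=
  ⟨⟨fun n => hA.comp (hF n), hFpre.comp_left hF hA⟩,
    ⟨fun n => (hF n).comp hA, hFpre.comp_right hA⟩⟩
end

section
/- Let (X,ν) be a probability space and let {T_n} be a sequence of operators in the class B+ such that lim_{n→∞} λ(T_n)/(a n^b c^n) = 1 for some a > 0, b a nonnegative integer, c ≥ 1. Set T̂_n = T_n/(a(n+1)^b c^n). Then the difference of Cesàro averages (1/N) Σ_{n=0}^{N−1} P(T_n) − (1/N) Σ_{n=0}^{N−1} T̂_n tends to zero in operator norm on L^p(X,ν) for every p ∈ [1,∞]; consequently, for any φ ∈ L^p(X,ν) the sequences (1/N) Σ_{n=0}^{N−1} P(T_n)(φ) and (1/N) Σ_{n=0}^{N−1} T̂_n(φ) converge (in L^p, or ν-almost everywhere) simultaneously and have the same limit. -/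
open MeasureTheory Filter ENNReal

/-!
`P(Tₙ) - T̂ₙ = (λₙ⁻¹ - βₙ⁻¹) Tₙ` with `βₙ = a (n+1)^b cⁿ`, and since `Tₙ ∈ B⁺` its norm on every
`L^p` is at most `|λₙ⁻¹ - βₙ⁻¹| λₙ = |1 - λₙ/βₙ|`. Replacing `n^b` by `(n+1)^b` does not change the
asymptotics, so `λₙ/βₙ → 1`; hence these norms tend to `0`, and so do their Cesàro means, which
bound the difference of the Cesàro averages. An `L^p`-limit of one average is then one of the
other by the triangle inequality, and the `L^∞` bound makes the two averages differ by a null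
sequence at almost every point.
-/

open Topology Finset

namespace MeasureTheory

variable {α E ι : Type*} [NormedAddCommGroup E] {m : MeasurableSpace α} {μ : Measure α}
  {p : ℝ≥0∞} {l : Filter ι}

theorem Lp.coeFn_sum (s : Finset ι) (f : ι → Lp E p μ) :
    ⇑(∑ i ∈ s, f i) =ᵐ[μ] ∑ i ∈ s, ⇑(f i) := by
  classical
  induction s using Finset.induction_on with
  | empty => simpa using Lp.coeFn_zero E p μ
  | insert i s hi ih =>
    simpa only [Finset.sum_insert hi] using (Lp.coeFn_add _ _).trans (EventuallyEq.rfl.add ih)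

theorem exists_measurable_le_eLpNorm_eq (f : α → ℝ≥0∞) (hp0 : p ≠ 0) (hp : p ≠ ∞) :
    ∃ g : α → ℝ≥0∞, Measurable g ∧ g ≤ f ∧ eLpNorm g p μ = eLpNorm f p μ := by
  have hr : 0 < p.toReal := ENNReal.toReal_pos hp0 hp
  obtain ⟨φ, hφ, hφf, hφ_eq⟩ := exists_measurable_le_lintegral_eq μ (fun x => f x ^ p.toReal)
  refine ⟨fun x => φ x ^ p.toReal⁻¹, hφ.pow_const _, fun x => ?_, ?_⟩
  · simpa [← ENNReal.rpow_mul, mul_inv_cancel₀ hr.ne'] using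
      ENNReal.rpow_le_rpow (hφf x) (inv_nonneg.2 hr.le)
  · simp only [eLpNorm_eq_lintegral_rpow_enorm_toReal hp0 hp, enorm_eq_self, ← ENNReal.rpow_mul,
      inv_mul_cancel₀ hr.ne', ENNReal.rpow_one, hφ_eq]

theorem eLpNorm_add_le_of_aestronglyMeasurable_left {f g : α → E}
    (hf : AEStronglyMeasurable f μ) (hp : 1 ≤ p) :
    eLpNorm (f + g) p μ ≤ eLpNorm f p μ + eLpNorm g p μ := by
  rcases eq_or_ne p ∞ with rfl | hp_top
  · simpa only [eLpNorm_exponent_top] using eLpNormEssSup_add_le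
  obtain ⟨h, hh, hh_le, hh_eq⟩ :=
    exists_measurable_le_eLpNorm_eq (μ := μ) (‖(f + g) ·‖ₑ) (by positivity) hp_top
  -- `v` is a measurable stand-in for `‖g‖ₑ`, which may fail to be measurable
  set v : α → ℝ≥0∞ := fun x => h x - ‖f x‖ₑ
  have hv_le : ∀ x, v x ≤ ‖g x‖ₑ := fun x =>
    tsub_le_iff_left.2 ((hh_le x).trans (enorm_add_le _ _))
  calc eLpNorm (f + g) p μ = eLpNorm h p μ := by rw [hh_eq, eLpNorm_enorm]
    _ ≤ eLpNorm ((‖f ·‖ₑ) + v) p μ := eLpNorm_mono_enorm fun x => by simpa using le_add_tsub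
    _ ≤ eLpNorm (‖f ·‖ₑ) p μ + eLpNorm v p μ :=
        eLpNorm_add_le hf.enorm.aestronglyMeasurable
          (hh.aemeasurable.sub hf.enorm).aestronglyMeasurable hp
    _ ≤ eLpNorm f p μ + eLpNorm g p μ := by
        rw [eLpNorm_enorm]
        gcongr
        exact eLpNorm_mono_enorm fun x => by simpa using hv_le x

theorem tendsto_eLpNorm_sub_of_tendsto_eLpNorm_sub {u v : ι → α → E} {g : α → E}
    (hvu : ∀ i, AEStronglyMeasurable (v i - u i) μ) (hp : 1 ≤ p)
    (huv : Tendsto (fun i => eLpNorm (u i - v i) p μ) l (𝓝 0))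
    (hu : Tendsto (fun i => eLpNorm (u i - g) p μ) l (𝓝 0)) :
    Tendsto (fun i => eLpNorm (v i - g) p μ) l (𝓝 0) := by
  have hsum : Tendsto (fun i => eLpNorm (v i - u i) p μ + eLpNorm (u i - g) p μ) l (𝓝 0) := by
    simpa only [eLpNorm_sub_comm (v _), add_zero] using huv.add hu
  refine tendsto_of_tendsto_of_tendsto_of_le_of_le tendsto_const_nhds hsum
    (fun _ => zero_le) fun i => ?_
  calc eLpNorm (v i - g) p μ = eLpNorm ((v i - u i) + (u i - g)) p μ := by
        rw [sub_add_sub_cancel]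
    _ ≤ _ := eLpNorm_add_le_of_aestronglyMeasurable_left (hvu i) hp

theorem tendsto_eLpNorm_sub_iff_of_tendsto_eLpNorm_sub {u v : ι → α → E}
    (hu : ∀ i, AEStronglyMeasurable (u i) μ) (hv : ∀ i, AEStronglyMeasurable (v i) μ)
    (hp : 1 ≤ p) (huv : Tendsto (fun i => eLpNorm (u i - v i) p μ) l (𝓝 0)) (g : α → E) :
    Tendsto (fun i => eLpNorm (u i - g) p μ) l (𝓝 0) ↔
      Tendsto (fun i => eLpNorm (v i - g) p μ) l (𝓝 0) :=
  ⟨tendsto_eLpNorm_sub_of_tendsto_eLpNorm_sub (fun i => (hv i).sub (hu i)) hp huv,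
    tendsto_eLpNorm_sub_of_tendsto_eLpNorm_sub (fun i => (hu i).sub (hv i)) hp
      (by simpa only [eLpNorm_sub_comm (u _)] using huv)⟩

theorem ae_tendsto_zero_of_tendsto_eLpNorm_top [Countable ι] {F : ι → α → E}
    (hF : Tendsto (fun i => eLpNorm (F i) ∞ μ) l (𝓝 0)) :
    ∀ᵐ x ∂μ, Tendsto (fun i => F i x) l (𝓝 0) := by
  filter_upwards [ae_all_iff.2 fun i => enorm_ae_le_eLpNormEssSup (F i) μ] with x hx
  refine tendsto_zero_iff_enorm_tendsto_zero.2 <| tendsto_of_tendsto_of_tendsto_of_le_of_le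
    tendsto_const_nhds hF (fun _ => zero_le) fun i => ?_
  simpa only [eLpNorm_exponent_top] using hx i

end MeasureTheory

theorem ENNReal.tendsto_zero_of_le_ofReal_mul {ι : Type*} {u : ι → ℝ≥0∞} {C : ι → ℝ} {l : Filter ι}
    {K : ℝ≥0∞} (hC : Tendsto C l (𝓝 0)) (hK : K ≠ ∞) (hu : ∀ i, u i ≤ ENNReal.ofReal (C i) * K) :
    Tendsto u l (𝓝 0) := by
  have hCK : Tendsto (fun i => ENNReal.ofReal (C i) * K) l (𝓝 0) := by
    simpa using ENNReal.Tendsto.mul_const (ENNReal.tendsto_ofReal hC) (Or.inr hK)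
  exact tendsto_of_tendsto_of_tendsto_of_le_of_le tendsto_const_nhds hCK (fun _ => zero_le) hu

theorem Filter.Tendsto.div_succ_pow_mul {x : ℕ → ℝ} {a c : ℝ} {b : ℕ}
    (h : Tendsto (fun n : ℕ => x n / (a * (n : ℝ) ^ b * c ^ n)) atTop (𝓝 1)) :
    Tendsto (fun n : ℕ => x n / (a * ((n : ℝ) + 1) ^ b * c ^ n)) atTop (𝓝 1) := by
  have hratio : Tendsto (fun n : ℕ => ((n : ℝ) / (n + 1)) ^ b) atTop (𝓝 1) := by
    simpa using (tendsto_natCast_div_add_atTop (1 : ℝ)).pow b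
  have h' : Tendsto (fun n : ℕ => x n / (a * (n : ℝ) ^ b * c ^ n) * ((n : ℝ) / (n + 1)) ^ b)
      atTop (𝓝 1) := by
    simpa using h.mul hratio
  refine h'.congr' ?_
  filter_upwards [h.eventually_ne one_ne_zero] with n hn
  obtain ⟨-, hden⟩ := div_ne_zero_iff.1 hn
  obtain ⟨han, hcn⟩ := mul_ne_zero_iff.1 hden
  obtain ⟨ha, hnb⟩ := mul_ne_zero_iff.1 han
  rw [div_pow]
  field_simp

theorem Filter.Tendsto.abs_inv_sub_inv_mul {ι : Type*} {x y : ι → ℝ} {l : Filter ι}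
    (hx : ∀ i, 0 ≤ x i) (h : Tendsto (fun i => x i / y i) l (𝓝 1)) :
    Tendsto (fun i => |(x i)⁻¹ - (y i)⁻¹| * x i) l (𝓝 0) := by
  have h' : Tendsto (fun i => |1 - x i / y i|) l (𝓝 0) := by
    simpa using ((tendsto_const_nhds (x := (1 : ℝ))).sub h).abs
  refine h'.congr' ?_
  filter_upwards [h.eventually_ne one_ne_zero] with i hi
  have hxi : x i ≠ 0 := (div_ne_zero_iff.1 hi).1
  have : ((x i)⁻¹ - (y i)⁻¹) * x i = 1 - x i / y i := by field_simp
  rw [← this, abs_mul, abs_of_nonneg (hx i)]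

namespace Paper

variable {X : Type*} [MeasurableSpace X] {ν : Measure X}

theorem InBPlus.lam_nonneg [IsFiniteMeasure ν] [NeZero ν] {A : Lp ℝ 1 ν →ₗ[ℝ] Lp ℝ 1 ν}
    {lam : ℝ} (h : InBPlus ν A lam) : 0 ≤ lam := by
  have h_one : eLpNorm (⇑(oneL ν)) 1 ν ≠ 0 := by
    rw [oneL, eLpNorm_congr_ae (MemLp.coeFn_toLp _), eLpNorm_const _ one_ne_zero (NeZero.ne ν)]
    simp [NeZero.ne ν]
  have h_le := (h.2.2 1 le_rfl (oneL ν) (Lp.memLp _)).2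
  rw [h.1, eLpNorm_congr_ae (Lp.coeFn_smul _ _), eLpNorm_const_smul,
    ENNReal.mul_le_mul_iff_left h_one (Lp.memLp _).eLpNorm_ne_top, Real.enorm_eq_ofReal_abs,
    ENNReal.ofReal_le_ofReal_iff'] at h_le
  rcases h_le with h_le | h_le
  · exact (abs_nonneg lam).trans h_le
  · exact (abs_nonpos_iff.1 h_le).ge

theorem InBPlus.eLpNorm_smul_apply_le [IsFiniteMeasure ν] {A : Lp ℝ 1 ν →ₗ[ℝ] Lp ℝ 1 ν}
    {lam : ℝ} (h : InBPlus ν A lam) (s : ℝ) {p : ℝ≥0∞} (hp : 1 ≤ p) {f : Lp ℝ 1 ν}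
    (hf : MemLp (⇑f) p ν) :
    eLpNorm (⇑((s • A) f)) p ν ≤ ENNReal.ofReal (|s| * lam) * eLpNorm (⇑f) p ν := by
  rw [LinearMap.smul_apply, eLpNorm_congr_ae (Lp.coeFn_smul _ _), eLpNorm_const_smul,
    Real.enorm_eq_ofReal_abs, ENNReal.ofReal_mul (abs_nonneg s), mul_assoc]
  gcongr
  exact (h.2.2 p hp f hf).2

theorem cesaro_smul_sub_cesaro_smul (T : ℕ → Lp ℝ 1 ν →ₗ[ℝ] Lp ℝ 1 ν) (s t : ℕ → ℝ) (N : ℕ) :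
    cesaro ν (fun n => s n • T n) N - cesaro ν (fun n => t n • T n) N =
      cesaro ν (fun n => (s n - t n) • T n) N := by
  simp only [cesaro, ← smul_sub, ← Finset.sum_sub_distrib, sub_smul]

theorem eLpNorm_cesaro_apply_le_s12 (S : ℕ → Lp ℝ 1 ν →ₗ[ℝ] Lp ℝ 1 ν) {K : ℕ → ℝ}
    (hK : ∀ n, 0 ≤ K n) {p : ℝ≥0∞} (hp : 1 ≤ p) (f : Lp ℝ 1 ν)
    (hS : ∀ n, eLpNorm (⇑(S n f)) p ν ≤ ENNReal.ofReal (K n) * eLpNorm (⇑f) p ν) (N : ℕ) :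
    eLpNorm (⇑(cesaro ν S N f)) p ν ≤
      ENNReal.ofReal ((N : ℝ)⁻¹ * ∑ n ∈ range N, K n) * eLpNorm (⇑f) p ν := by
  have hsum : eLpNorm (⇑(∑ n ∈ range N, S n f)) p ν ≤
      ENNReal.ofReal (∑ n ∈ range N, K n) * eLpNorm (⇑f) p ν :=
    calc eLpNorm (⇑(∑ n ∈ range N, S n f)) p ν = eLpNorm (∑ n ∈ range N, ⇑(S n f)) p ν :=
          eLpNorm_congr_ae (Lp.coeFn_sum _ _)
      _ ≤ ∑ n ∈ range N, eLpNorm (⇑(S n f)) p ν :=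
          eLpNorm_sum_le (fun n _ => Lp.aestronglyMeasurable _) hp
      _ ≤ ∑ n ∈ range N, ENNReal.ofReal (K n) * eLpNorm (⇑f) p ν := sum_le_sum fun n _ => hS n
      _ = _ := by rw [← sum_mul, ENNReal.ofReal_sum_of_nonneg fun n _ => hK n]
  rw [cesaro, LinearMap.smul_apply, LinearMap.sum_apply, eLpNorm_congr_ae (Lp.coeFn_smul _ _),
    eLpNorm_const_smul, ENNReal.ofReal_mul (by positivity), mul_assoc, Real.enorm_eq_ofReal_abs,
    abs_of_nonneg (by positivity)]
  gcongr

theorem eLpNorm_cesaro_smul_sub_cesaro_smul_apply_le [IsFiniteMeasure ν] [NeZero ν]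
    {T : ℕ → Lp ℝ 1 ν →ₗ[ℝ] Lp ℝ 1 ν} {lam : ℕ → ℝ} (hT : ∀ n, InBPlus ν (T n) (lam n))
    (s t : ℕ → ℝ) {p : ℝ≥0∞} (hp : 1 ≤ p) {f : Lp ℝ 1 ν} (hf : MemLp (⇑f) p ν) (N : ℕ) :
    eLpNorm (⇑(cesaro ν (fun n => s n • T n) N f - cesaro ν (fun n => t n • T n) N f)) p ν ≤
      ENNReal.ofReal ((N : ℝ)⁻¹ * ∑ n ∈ range N, |s n - t n| * lam n) * eLpNorm (⇑f) p ν := by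
  rw [← LinearMap.sub_apply, cesaro_smul_sub_cesaro_smul]
  exact eLpNorm_cesaro_apply_le_s12 _ (fun n => mul_nonneg (abs_nonneg _) (hT n).lam_nonneg) hp f
    (fun n => (hT n).eLpNorm_smul_apply_le _ hp hf) N

end Paper

open Paper MeasureTheory Filter in
theorem approximate_normalisation_general
    {X : Type*} [MeasurableSpace X] (ν : MeasureTheory.Measure X) [IsProbabilityMeasure ν]
    (T : ℕ → (Lp ℝ 1 ν →ₗ[ℝ] Lp ℝ 1 ν)) (lam : ℕ → ℝ)
    (hT : ∀ n, InBPlus ν (T n) (lam n))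
    (a : ℝ) (b : ℕ) (c : ℝ)
    (hlim : Tendsto (fun n : ℕ => lam n / (a * (n : ℝ) ^ b * c ^ n)) atTop (nhds 1)) :
    (∀ (p : ℝ≥0∞), 1 ≤ p →
      ∃ C : ℕ → ℝ, Tendsto C atTop (nhds 0) ∧
        ∀ (N : ℕ) (f : Lp ℝ 1 ν), MemLp (⇑f) p ν →
          eLpNorm
            (⇑(cesaro ν (fun n => (lam n)⁻¹ • T n) N f -
               cesaro ν (fun n => (a * ((n : ℝ) + 1) ^ b * c ^ n)⁻¹ • T n) N f)) p ν ≤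
            ENNReal.ofReal (C N) * eLpNorm (⇑f) p ν) ∧
    (∀ (p : ℝ≥0∞), 1 ≤ p → p ≠ ∞ → ∀ φ : Lp ℝ 1 ν, MemLp (⇑φ) p ν →
      ∀ g : X → ℝ,
        (Tendsto
            (fun N => eLpNorm (fun x => (cesaro ν (fun n => (lam n)⁻¹ • T n) N φ) x - g x) p ν)
            atTop (nhds 0) ↔
          Tendsto
            (fun N => eLpNorm
              (fun x => (cesaro ν (fun n => (a * ((n : ℝ) + 1) ^ b * c ^ n)⁻¹ • T n) N φ) x - g x)
              p ν)
            atTop (nhds 0))) ∧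
    (∀ φ : Lp ℝ 1 ν, MemLp (⇑φ) ∞ ν →
      ∀ᵐ x ∂ν, ∀ L : ℝ,
        (Tendsto (fun N => (cesaro ν (fun n => (lam n)⁻¹ • T n) N φ) x) atTop (nhds L) ↔
          Tendsto (fun N => (cesaro ν (fun n => (a * ((n : ℝ) + 1) ^ b * c ^ n)⁻¹ • T n) N φ) x)
            atTop (nhds L))) := by
  set β : ℕ → ℝ := fun n => a * ((n : ℝ) + 1) ^ b * c ^ n
  set C : ℕ → ℝ := fun N => (N : ℝ)⁻¹ * ∑ n ∈ range N, |(lam n)⁻¹ - (β n)⁻¹| * lam n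
  have hC : Tendsto C atTop (nhds 0) :=
    (hlim.div_succ_pow_mul.abs_inv_sub_inv_mul fun n => (hT n).lam_nonneg).cesaro
  have hbound : ∀ (p : ℝ≥0∞), 1 ≤ p → ∀ (N : ℕ) (f : Lp ℝ 1 ν), MemLp (⇑f) p ν →
      eLpNorm (⇑(cesaro ν (fun n => (lam n)⁻¹ • T n) N f - cesaro ν (fun n => (β n)⁻¹ • T n) N f))
        p ν ≤ ENNReal.ofReal (C N) * eLpNorm (⇑f) p ν := fun p hp N f hf =>
    eLpNorm_cesaro_smul_sub_cesaro_smul_apply_le hT _ _ hp hf N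
  have hdiff : ∀ (p : ℝ≥0∞), 1 ≤ p → ∀ f : Lp ℝ 1 ν, MemLp (⇑f) p ν →
      Tendsto (fun N => eLpNorm (⇑(cesaro ν (fun n => (lam n)⁻¹ • T n) N f) -
        ⇑(cesaro ν (fun n => (β n)⁻¹ • T n) N f)) p ν) atTop (nhds 0) := fun p hp f hf =>
    ENNReal.tendsto_zero_of_le_ofReal_mul hC hf.eLpNorm_ne_top fun N =>
      (eLpNorm_congr_ae (Lp.coeFn_sub _ _)).ge.trans (hbound p hp N f hf)
  refine ⟨fun p hp => ⟨C, hC, hbound p hp⟩, fun p hp _ φ hφ g => ?_, fun φ hφ => ?_⟩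
  · exact tendsto_eLpNorm_sub_iff_of_tendsto_eLpNorm_sub (fun _ => Lp.aestronglyMeasurable _)
      (fun _ => Lp.aestronglyMeasurable _) hp (hdiff p hp φ hφ) g
  · filter_upwards [ae_tendsto_zero_of_tendsto_eLpNorm_top (hdiff ∞ le_top φ hφ)] with x hx L
    exact ⟨fun h => by
        simpa only [sub_zero] using (h.sub hx).congr fun _ => _root_.sub_sub_cancel _ _,
      fun h => by simpa only [add_zero] using (h.add hx).congr fun _ => add_sub_cancel _ _⟩

open Paper MeasureTheory Filter in
/-- **Claim (approximate normalisation).**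
Let `{Tₙ} ⊂ B⁺` with `λ(Tₙ)/(a n^b cⁿ) → 1` (`a > 0`, `b ∈ ℕ`, `c ≥ 1`), and set
`T̂ₙ = Tₙ/(a (n+1)^b cⁿ)`.  Then the difference of the Cesàro averages
`(1/N)∑_{n<N} P(Tₙ) − (1/N)∑_{n<N} T̂ₙ` tends to `0` in operator norm on every `L^p`,
`p ∈ [1,∞]`; consequently, for `φ ∈ L^p` (`p < ∞`) the two sequences of Cesàro averages
converge in `L^p` simultaneously with the same limit, and for `φ ∈ L^∞` they converge
ν-a.e. simultaneously with the same limit. -/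
theorem approximate_normalisation
    {X : Type*} [MeasurableSpace X] (ν : MeasureTheory.Measure X) [IsProbabilityMeasure ν]
    (T : ℕ → (Lp ℝ 1 ν →ₗ[ℝ] Lp ℝ 1 ν)) (lam : ℕ → ℝ)
    (hT : ∀ n, InBPlus ν (T n) (lam n))
    (a : ℝ) (ha : 0 < a) (b : ℕ) (c : ℝ) (hc : 1 ≤ c)
    (hlim : Tendsto (fun n : ℕ => lam n / (a * (n : ℝ) ^ b * c ^ n)) atTop (nhds 1)) :
    (∀ (p : ℝ≥0∞), 1 ≤ p →
      ∃ C : ℕ → ℝ, Tendsto C atTop (nhds 0) ∧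
        ∀ (N : ℕ) (f : Lp ℝ 1 ν), MemLp (⇑f) p ν →
          eLpNorm
            (⇑(cesaro ν (fun n => (lam n)⁻¹ • T n) N f -
               cesaro ν (fun n => (a * ((n : ℝ) + 1) ^ b * c ^ n)⁻¹ • T n) N f)) p ν ≤
            ENNReal.ofReal (C N) * eLpNorm (⇑f) p ν) ∧
    (∀ (p : ℝ≥0∞), 1 ≤ p → p ≠ ∞ → ∀ φ : Lp ℝ 1 ν, MemLp (⇑φ) p ν →
      ∀ g : X → ℝ,
        (Tendsto
            (fun N => eLpNorm (fun x => (cesaro ν (fun n => (lam n)⁻¹ • T n) N φ) x - g x) p ν)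
            atTop (nhds 0) ↔
          Tendsto
            (fun N => eLpNorm
              (fun x => (cesaro ν (fun n => (a * ((n : ℝ) + 1) ^ b * c ^ n)⁻¹ • T n) N φ) x - g x)
              p ν)
            atTop (nhds 0))) ∧
    (∀ φ : Lp ℝ 1 ν, MemLp (⇑φ) ∞ ν →
      ∀ᵐ x ∂ν, ∀ L : ℝ,
        (Tendsto (fun N => (cesaro ν (fun n => (lam n)⁻¹ • T n) N φ) x) atTop (nhds L) ↔
          Tendsto (fun N => (cesaro ν (fun n => (a * ((n : ℝ) + 1) ^ b * c ^ n)⁻¹ • T n) N φ) x)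
            atTop (nhds L))) :=
  approximate_normalisation_general ν T lam hT a b c hlim
end

section
/- Let {x_n} and {y_n} be sequences of nonnegative reals such that lim_{n→∞} x_n/(a_F n^{b_F} c_F^n) = 1 and lim_{n→∞} y_n/(a_G n^{b_G} c_G^n) = 1, where a_F, a_G > 0, b_F, b_G are nonnegative integers, and c_F > c_G ≥ 1. Then the series Σ_{m=0}^∞ y_m c_F^{−m} converges absolutely and lim_{n→∞} (Σ_{k+m=n} x_k y_m)/(a_F (n+1)^{b_F} c_F^n) = Σ_{m=0}^∞ y_m c_F^{−m}; in particular, the convolution sequence z_n = Σ_{k+m=n} x_k y_m satisfies lim_{n→∞} z_n/(a_H n^{b_F} c_F^n) = 1 with a_H = a_F Σ_{m=0}^∞ y_m c_F^{−m}. -/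
open Filter

lemma my_exists_bound (u : ℕ → ℝ) (hu : ∀ n, 0 ≤ u n) {a : ℝ} (ha : 0 < a) (b : ℕ) {c : ℝ}
    (hc : 1 ≤ c)
    (h : Tendsto (fun n : ℕ => u n / (a * (n : ℝ) ^ b * c ^ n)) atTop (nhds 1)) :
    ∃ C, 0 < C ∧ ∀ n : ℕ, u n ≤ C * ((n : ℝ) + 1) ^ b * c ^ n := by
  have h2 : ∀ᶠ n : ℕ in atTop, u n / (a * (n : ℝ) ^ b * c ^ n) ≤ 2 :=
    h.eventually (eventually_le_nhds one_lt_two)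
  obtain ⟨N, hN⟩ := eventually_atTop.mp h2
  set M := max N 1
  have hsum : 0 ≤ ∑ k ∈ Finset.range (M + 1), u k := Finset.sum_nonneg fun k _ => hu k
  refine ⟨2 * a + (∑ k ∈ Finset.range (M + 1), u k) + 1, by linarith, fun n => ?_⟩
  have hpow1 : (1:ℝ) ≤ ((n:ℝ)+1) ^ b := one_le_pow₀ (by linarith [Nat.cast_nonneg (α := ℝ) n])
  have hcn1 : (1:ℝ) ≤ c ^ n := one_le_pow₀ hc
  have hcn : (0:ℝ) < c ^ n := by linarith
  have hfac : (1 : ℝ) ≤ ((n : ℝ) + 1) ^ b * c ^ n := by nlinarith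
  rcases le_or_gt n M with hn | hn
  · have hle : u n ≤ ∑ k ∈ Finset.range (M + 1), u k :=
      Finset.single_le_sum (fun k _ => hu k) (Finset.mem_range.mpr (by omega))
    calc u n ≤ 2 * a + (∑ k ∈ Finset.range (M + 1), u k) + 1 := by linarith
    _ = (2 * a + (∑ k ∈ Finset.range (M + 1), u k) + 1) * 1 := by ring
    _ ≤ _ := by
        rw [mul_assoc]
        exact mul_le_mul_of_nonneg_left hfac (by linarith)
  · have hn1 : 1 ≤ n := le_trans (le_max_right N 1) hn.le
    have hd : 0 < a * (n : ℝ) ^ b * c ^ n := by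
      have h1n : (1:ℝ) ≤ (n:ℝ) := by exact_mod_cast hn1
      have : (0:ℝ) < (n:ℝ) ^ b := by positivity
      positivity
    have hun := hN n (le_trans (le_max_left N 1) hn.le)
    rw [div_le_iff₀ hd] at hun
    have hmono : (n : ℝ) ^ b ≤ ((n : ℝ) + 1) ^ b :=
      pow_le_pow_left₀ (by positivity) (by linarith) b
    calc u n ≤ 2 * (a * (n:ℝ) ^ b * c ^ n) := hun
    _ = (2 * a) * ((n:ℝ) ^ b * c ^ n) := by ring
    _ ≤ (2 * a) * (((n:ℝ)+1) ^ b * c ^ n) := by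
        apply mul_le_mul_of_nonneg_left _ (by linarith)
        exact mul_le_mul_of_nonneg_right hmono hcn.le
    _ ≤ (2 * a + (∑ k ∈ Finset.range (M + 1), u k) + 1) * (((n:ℝ)+1) ^ b * c ^ n) := by
        apply mul_le_mul_of_nonneg_right _ (by positivity)
        linarith
    _ = _ := by ring

lemma my_ratio_tendsto (m b : ℕ) :
    Tendsto (fun n : ℕ => (((n - m : ℕ) : ℝ)) ^ b / ((n : ℝ) + 1) ^ b) atTop (nhds 1) := by
  have h0 : Tendsto (fun n : ℕ => 1 - ((m : ℝ) + 1) * (1 / ((n : ℝ) + 1))) atTop (nhds 1) := by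
    have := (tendsto_one_div_add_atTop_nhds_zero_nat).const_mul ((m : ℝ) + 1)
    simpa using tendsto_const_nhds.sub this
  have h1 : Tendsto (fun n : ℕ => (((n - m : ℕ) : ℝ)) / ((n : ℝ) + 1)) atTop (nhds 1) := by
    apply h0.congr'
    filter_upwards [eventually_ge_atTop m] with n hn
    have hc : ((n - m : ℕ) : ℝ) = (n : ℝ) - m := by
      push_cast [Nat.cast_sub hn]; ring
    rw [hc]
    have hne : ((n : ℝ) + 1) ≠ 0 := by positivity
    field_simp
    ring
  have := h1.pow b
  simpa [div_pow] using this

lemma my_ratio_tendsto' (b : ℕ) :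
    Tendsto (fun n : ℕ => ((n : ℝ) + 1) ^ b / ((n : ℝ)) ^ b) atTop (nhds 1) := by
  have h0 : Tendsto (fun n : ℕ => 1 + 1 / (n : ℝ)) atTop (nhds 1) := by
    simpa using tendsto_const_nhds.add (tendsto_one_div_atTop_nhds_zero_nat (𝕜 := ℝ))
  have h1 : Tendsto (fun n : ℕ => ((n : ℝ) + 1) / (n : ℝ)) atTop (nhds 1) := by
    apply h0.congr'
    filter_upwards [eventually_ge_atTop 1] with n hn
    have hne : ((n : ℝ)) ≠ 0 := by
      have : (1:ℝ) ≤ (n:ℝ) := by exact_mod_cast hn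
      linarith
    field_simp
  have := h1.pow b
  simpa [div_pow] using this

/-- **Convolution asymptotics, dominant exponential case.**
If `xₙ/(a_F n^{b_F} c_F^n) → 1` and `yₙ/(a_G n^{b_G} c_G^n) → 1` with `a_F, a_G > 0`,
`b_F, b_G ∈ ℕ` and `c_F > c_G ≥ 1`, then `∑_m y_m c_F^{-m}` converges absolutely,
`(∑_{k+m=n} x_k y_m)/(a_F (n+1)^{b_F} c_F^n) → ∑_{m=0}^∞ y_m c_F^{-m}`, and in
particular the convolution `zₙ = ∑_{k+m=n} x_k y_m` satisfies
`zₙ/(a_H n^{b_F} c_F^n) → 1` with `a_H = a_F ∑_{m=0}^∞ y_m c_F^{-m}`. -/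
theorem convolution_asymptotics_dominant
    (x y : ℕ → ℝ) (hx0 : ∀ n, 0 ≤ x n) (hy0 : ∀ n, 0 ≤ y n)
    (aF aG : ℝ) (haF : 0 < aF) (haG : 0 < aG) (bF bG : ℕ) (cF cG : ℝ)
    (hcG : 1 ≤ cG) (hcFG : cG < cF)
    (hx : Tendsto (fun n : ℕ => x n / (aF * (n : ℝ) ^ bF * cF ^ n)) atTop (nhds 1))
    (hy : Tendsto (fun n : ℕ => y n / (aG * (n : ℝ) ^ bG * cG ^ n)) atTop (nhds 1)) :
    Summable (fun m : ℕ => |y m / cF ^ m|) ∧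
    Tendsto
      (fun n : ℕ => (∑ k ∈ Finset.range (n + 1), x k * y (n - k)) /
        (aF * ((n : ℝ) + 1) ^ bF * cF ^ n))
      atTop (nhds (∑' m : ℕ, y m / cF ^ m)) ∧
    Tendsto
      (fun n : ℕ => (∑ k ∈ Finset.range (n + 1), x k * y (n - k)) /
        ((aF * ∑' m : ℕ, y m / cF ^ m) * (n : ℝ) ^ bF * cF ^ n))
      atTop (nhds 1) := by
  have hcF1 : 1 < cF := lt_of_le_of_lt hcG hcFG
  have hcF0 : (0:ℝ) < cF := by linarith
  set r : ℝ := cG / cF with hr_def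
  have hr0 : 0 < r := div_pos (by linarith) hcF0
  have hr1 : r < 1 := (div_lt_one hcF0).mpr hcFG
  -- bounds
  obtain ⟨Cx, hCx0, hCx⟩ := my_exists_bound x hx0 haF bF hcF1.le hx
  obtain ⟨Cy, hCy0, hCy⟩ := my_exists_bound y hy0 haG bG hcG hy
  -- summability of the geometric-type bound
  have hsum_geo : Summable (fun m : ℕ => ((m:ℝ)+1) ^ bG * r ^ m) := by
    have h1 : Summable (fun m : ℕ => (m:ℝ) ^ bG * r ^ m) :=
      summable_pow_mul_geometric_of_norm_lt_one bG
        (by rw [Real.norm_eq_abs, abs_of_pos hr0]; exact hr1)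
    have h2 := (summable_nat_add_iff 1).mpr h1
    have h3 := h2.mul_right r⁻¹
    apply h3.congr
    intro m
    have : r ^ (m+1) = r ^ m * r := pow_succ r m
    push_cast
    rw [this]
    field_simp
  have habs : ∀ m : ℕ, |y m / cF ^ m| ≤ Cy * (((m:ℝ)+1) ^ bG * r ^ m) := by
    intro m
    have hcFm : (0:ℝ) < cF ^ m := pow_pos hcF0 m
    rw [abs_of_nonneg (div_nonneg (hy0 m) hcFm.le)]
    have : Cy * (((m:ℝ)+1) ^ bG * r ^ m) = (Cy * ((m:ℝ)+1) ^ bG * cG ^ m) / cF ^ m := by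
      rw [hr_def, div_pow]
      field_simp
    rw [this]
    gcongr
    exact hCy m
  have S1 : Summable (fun m : ℕ => |y m / cF ^ m|) := by
    apply Summable.of_nonneg_of_le (fun m => abs_nonneg _) habs (hsum_geo.mul_left Cy)
  have hsumy : Summable (fun m : ℕ => y m / cF ^ m) := summable_abs_iff.mp S1
  -- the kernel of the convolution, normalized
  set S : ℝ := ∑' m : ℕ, y m / cF ^ m with hS_def
  have hbound_sum : Summable (fun m : ℕ => Cx / aF * (y m / cF ^ m)) := hsumy.mul_left _
  -- pointwise limits
  have hpt : ∀ m : ℕ, Tendsto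
      (fun n : ℕ => if m ≤ n then x (n - m) * y m / (aF * ((n:ℝ)+1) ^ bF * cF ^ n) else 0)
      atTop (nhds (y m / cF ^ m)) := by
    intro m
    have hA : Tendsto (fun n : ℕ =>
        x (n - m) / (aF * ((n - m : ℕ) : ℝ) ^ bF * cF ^ (n - m))) atTop (nhds 1) :=
      hx.comp (tendsto_sub_atTop_nat m)
    have hB := my_ratio_tendsto m bF
    have hlim := (hA.mul hB).mul_const (y m / cF ^ m)
    rw [one_mul, one_mul] at hlim
    apply hlim.congr'
    filter_upwards [eventually_ge_atTop (m+1)] with n hn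
    have hmn : m ≤ n := by omega
    rw [if_pos hmn]
    have hk1 : 1 ≤ n - m := by omega
    have hkR : (1:ℝ) ≤ ((n - m : ℕ) : ℝ) := by exact_mod_cast hk1
    have hk0 : ((n - m : ℕ) : ℝ) ≠ 0 := by linarith
    have hpow : cF ^ (n - m) * cF ^ m = cF ^ n := by
      rw [← pow_add]; congr 1; omega
    have hn1 : ((n:ℝ) + 1) ≠ 0 := by positivity
    have haF' : aF ≠ 0 := haF.ne'
    have hcF' : cF ≠ 0 := hcF0.ne'
    have hK : (((n - m : ℕ):ℝ)) ^ bF ≠ 0 := pow_ne_zero _ hk0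
    have hd1 : aF * (((n - m : ℕ):ℝ)) ^ bF * cF ^ (n - m) * ((n:ℝ)+1) ^ bF * cF ^ m ≠ 0 :=
      mul_ne_zero (mul_ne_zero (mul_ne_zero (mul_ne_zero haF' hK)
        (pow_ne_zero _ hcF')) (pow_ne_zero _ hn1)) (pow_ne_zero _ hcF')
    have hd2 : aF * ((n:ℝ)+1) ^ bF * (cF ^ (n - m) * cF ^ m) ≠ 0 :=
      mul_ne_zero (mul_ne_zero haF' (pow_ne_zero _ hn1))
        (mul_ne_zero (pow_ne_zero _ hcF') (pow_ne_zero _ hcF'))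
    rw [← hpow, div_mul_div_comm, div_mul_div_comm, div_eq_div_iff hd1 hd2]
    ring
  -- uniform bound
  have hbnd : ∀ n m : ℕ,
      ‖if m ≤ n then x (n - m) * y m / (aF * ((n:ℝ)+1) ^ bF * cF ^ n) else 0‖ ≤
        Cx / aF * (y m / cF ^ m) := by
    intro n m
    have hym := hy0 m
    by_cases hmn : m ≤ n
    · rw [if_pos hmn]
      have hD : (0:ℝ) < aF * ((n:ℝ)+1) ^ bF * cF ^ n := by positivity
      have hxm := hx0 (n - m)
      rw [Real.norm_eq_abs, abs_of_nonneg (div_nonneg (by positivity) hD.le),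
        div_le_iff₀ hD]
      have hpow : cF ^ (n - m) * cF ^ m = cF ^ n := by
        rw [← pow_add]; congr 1; omega
      have hle2 : (((n - m : ℕ):ℝ)+1) ^ bF ≤ ((n:ℝ)+1) ^ bF := by
        apply pow_le_pow_left₀ (by positivity)
        have : ((n - m : ℕ):ℝ) ≤ (n:ℝ) := by exact_mod_cast Nat.sub_le n m
        linarith
      have hcnm : (0:ℝ) < cF ^ (n - m) := pow_pos hcF0 _
      calc x (n - m) * y m ≤ (Cx * (((n - m : ℕ):ℝ)+1) ^ bF * cF ^ (n - m)) * y m := by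
            exact mul_le_mul_of_nonneg_right (hCx (n - m)) hym
      _ ≤ (Cx * ((n:ℝ)+1) ^ bF * cF ^ (n - m)) * y m := by
            apply mul_le_mul_of_nonneg_right _ hym
            apply mul_le_mul_of_nonneg_right _ hcnm.le
            exact mul_le_mul_of_nonneg_left hle2 hCx0.le
      _ = Cx / aF * (y m / cF ^ m) * (aF * ((n:ℝ)+1) ^ bF * cF ^ n) := by
            have haF' : aF ≠ 0 := haF.ne'
            have hcF' : cF ≠ 0 := hcF0.ne'
            rw [← hpow]
            field_simp
    · rw [if_neg hmn]
      simp only [norm_zero]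
      positivity
  have key := tendsto_tsum_of_dominated_convergence (𝓕 := atTop) hbound_sum hpt
      (Eventually.of_forall hbnd)
  -- identify the tsum with the finite convolution sum
  have hft : ∀ n : ℕ,
      (∑' m : ℕ, if m ≤ n then x (n - m) * y m / (aF * ((n:ℝ)+1) ^ bF * cF ^ n) else 0) =
      (∑ k ∈ Finset.range (n + 1), x k * y (n - k)) / (aF * ((n:ℝ)+1) ^ bF * cF ^ n) := by
    intro n
    rw [tsum_eq_sum (s := Finset.range (n+1))
      (fun m hm => if_neg (fun h => hm (Finset.mem_range.mpr (by omega))))]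
    have h1 : ∀ m ∈ Finset.range (n+1),
        (if m ≤ n then x (n - m) * y m / (aF * ((n:ℝ)+1) ^ bF * cF ^ n) else 0) =
        x (n - m) * y m / (aF * ((n:ℝ)+1) ^ bF * cF ^ n) := by
      intro m hm
      exact if_pos (by simpa [Nat.lt_succ_iff] using hm)
    rw [Finset.sum_congr rfl h1, ← Finset.sum_div]
    congr 1
    rw [← Finset.sum_range_reflect (fun k => x k * y (n - k)) (n+1)]
    apply Finset.sum_congr rfl
    intro m hm
    have hm' : m ≤ n := by simpa [Nat.lt_succ_iff] using hm
    have h1 : n + 1 - 1 - m = n - m := by omega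
    have h2 : n - (n - m) = m := Nat.sub_sub_self hm'
    rw [h1, h2]
  have main2 : Tendsto
      (fun n : ℕ => (∑ k ∈ Finset.range (n + 1), x k * y (n - k)) /
        (aF * ((n : ℝ) + 1) ^ bF * cF ^ n)) atTop (nhds S) := by
    apply key.congr hft
  -- positivity of S
  have hS : 0 < S := by
    have hev : ∀ᶠ n : ℕ in atTop, 0 < y n / (aG * (n:ℝ) ^ bG * cG ^ n) :=
      hy.eventually (eventually_gt_nhds one_pos)
    obtain ⟨n, hpos, hn1⟩ := (hev.and (eventually_ge_atTop 1)).exists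
    have hnR : (1:ℝ) ≤ (n:ℝ) := by exact_mod_cast hn1
    have hD : (0:ℝ) < aG * (n:ℝ) ^ bG * cG ^ n := by
      have : (0:ℝ) < (n:ℝ) ^ bG := by positivity
      positivity
    have hyn : 0 < y n := by
      have := mul_pos hpos hD
      rwa [div_mul_cancel₀ _ hD.ne'] at this
    exact Summable.tsum_pos hsumy (fun m => div_nonneg (hy0 m) (pow_pos hcF0 m).le) n
      (div_pos hyn (pow_pos hcF0 n))
  refine ⟨S1, main2, ?_⟩
  -- third part
  have h3 := (main2.mul (my_ratio_tendsto' bF)).mul_const S⁻¹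
  rw [mul_one, mul_inv_cancel₀ hS.ne'] at h3
  apply h3.congr'
  filter_upwards [eventually_ge_atTop 1] with n hn
  have hnR : (1:ℝ) ≤ (n:ℝ) := by exact_mod_cast hn
  have hn0 : ((n:ℝ)) ≠ 0 := by linarith
  have hn1 : ((n:ℝ) + 1) ≠ 0 := by positivity
  have hcFn : (cF:ℝ) ^ n ≠ 0 := (pow_pos hcF0 n).ne'
  have haF' : aF ≠ 0 := haF.ne'
  have hS' : S ≠ 0 := hS.ne'
  field_simp
end

section
/- Let {x_n} and {y_n} be sequences of nonnegative reals such that lim_{n→∞} x_n/(a_F n^{b_F} c^n) = 1 and lim_{n→∞} y_n/(a_G n^{b_G} c^n) = 1, where a_F, a_G > 0, b_F, b_G are nonnegative integers, and c ≥ 1. Then the convolution z_n = Σ_{k+m=n} x_k y_m satisfies lim_{n→∞} z_n/(a_F a_G B(b_F+1, b_G+1) n^{b_F+b_G+1} c^n) = 1, where B(u,v) is the Euler Beta function, B(b_F+1, b_G+1) = ∫_0^1 x^{b_F}(1−x)^{b_G} dx. -/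
/-!
Dividing by `cⁿ` reduces everything to `c = 1`, and then `x = a_F kᵖ + o(kᵖ)`,
`y = a_G mᵠ + o(mᵠ)`. The convolution of an `o(nᵖ)` sequence with an `O(nᵠ)` one is
`o(n^{p+q+1})`, because it is bounded by `(∑_{k ≤ n} |a_k|) · max_{m ≤ n} |b_m|`; so only the
convolution of the two monomials matters. For that one, `∑_{k+m=n} kᵖ mᵠ / n^{p+q+1}` tends to
`∫₀¹ tᵖ (1-t)ᵠ dt` by induction on `q`: writing `m = n - k`, resp. `1 - t`, both sides satisfy
`F(p, q+1) = F(p, q) - F(p+1, q)`, and the case `q = 0` is the power sum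
`∑_{k ≤ n} kᵖ ~ n^{p+1}/(p+1)`, squeezed between two integrals of `tᵖ`.
-/

open Filter Finset Asymptotics

def seqConv (x y : ℕ → ℝ) (n : ℕ) : ℝ :=
  ∑ p ∈ antidiagonal n, x p.1 * y p.2

theorem seqConv_comm (x y : ℕ → ℝ) : seqConv x y = seqConv y x := by
  ext n
  rw [seqConv, seqConv, ← Nat.sum_antidiagonal_swap]
  simp only [Prod.fst_swap, Prod.snd_swap, mul_comm]

theorem seqConv_div_pow (x y : ℕ → ℝ) (c : ℝ) (n : ℕ) :
    seqConv (fun k => x k / c ^ k) (fun m => y m / c ^ m) n = seqConv x y n / c ^ n := by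
  rw [seqConv, seqConv, sum_div]
  refine sum_congr rfl fun p hp => ?_
  rw [div_mul_div_comm, ← pow_add, mem_antidiagonal.mp hp]

theorem isLittleO_sub_mul_pow_iff (u : ℕ → ℝ) (L : ℝ) (p : ℕ) :
    ((fun n => u n - L * (n : ℝ) ^ p) =o[atTop] fun n => (n : ℝ) ^ p) ↔
      Tendsto (fun n => u n / (n : ℝ) ^ p) atTop (nhds L) := by
  have hne : ∀ᶠ n : ℕ in atTop, (n : ℝ) ^ p ≠ 0 :=
    (eventually_gt_atTop 0).mono fun n hn => by positivity
  rw [isLittleO_iff_tendsto' (hne.mono fun n hn h => absurd h hn),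
    ← tendsto_sub_nhds_zero_iff (u := fun n => u n / (n : ℝ) ^ p)]
  refine tendsto_congr' (hne.mono fun n hn => ?_)
  field_simp

theorem tendsto_div_const_mul_iff {α : Type*} {l : Filter α} {f g : α → ℝ} {A : ℝ}
    (hA : A ≠ 0) :
    Tendsto (fun n => f n / (A * g n)) l (nhds 1) ↔ Tendsto (fun n => f n / g n) l (nhds A) := by
  simp_rw [mul_comm A, ← div_div]
  refine ⟨fun h => ?_, fun h => ?_⟩
  · simpa [div_mul_cancel₀ _ hA] using h.mul_const A
  · simpa [hA] using h.div_const A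

theorem isTheta_natCast_add_one_pow (p : ℕ) :
    (fun n : ℕ => ((n : ℝ) + 1) ^ p) =Θ[atTop] fun n => (n : ℝ) ^ p := by
  have h : (fun n : ℕ => (n : ℝ) + 1) ~[atTop] fun n => (n : ℝ) :=
    IsEquivalent.refl.add_isLittleO <| (isLittleO_one_left_iff ℝ).2 <|
      tendsto_norm_atTop_atTop.comp tendsto_natCast_atTop_atTop
  exact (h.pow p).isTheta

theorem isLittleO_sum_range_succ_abs {a : ℕ → ℝ} {p : ℕ}
    (ha : a =o[atTop] fun n => ((n : ℝ) + 1) ^ p) :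
    (fun n => ∑ k ∈ range (n + 1), |a k|) =o[atTop] fun n => ((n : ℝ) + 1) ^ (p + 1) := by
  have hdiverge : Tendsto (fun n => ∑ k ∈ range n, ((k : ℝ) + 1) ^ p) atTop atTop := by
    refine tendsto_atTop_mono (fun n => ?_) tendsto_natCast_atTop_atTop
    calc (n : ℝ) = ∑ k ∈ range n, (1 : ℝ) := by simp
      _ ≤ _ := sum_le_sum fun k _ => one_le_pow₀ (le_add_of_nonneg_left k.cast_nonneg)
  have hsum := (ha.norm_left.sum_range (fun k => by positivity) hdiverge).comp_tendsto
    (tendsto_add_atTop_nat 1)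
  refine hsum.trans_isBigO (isBigO_of_le _ fun n => ?_)
  simp only [Function.comp_apply, Real.norm_eq_abs]
  refine abs_le_abs_of_nonneg (by positivity) ?_
  calc ∑ k ∈ range (n + 1), ((k : ℝ) + 1) ^ p ≤ ∑ k ∈ range (n + 1), ((n : ℝ) + 1) ^ p := by
        gcongr with k hk
        exact_mod_cast Nat.lt_succ_iff.mp (mem_range.mp hk)
    _ = _ := by simp [pow_succ, mul_comm]

theorem isLittleO_seqConv {a b : ℕ → ℝ} {p q : ℕ}
    (ha : a =o[atTop] fun n => (n : ℝ) ^ p) (hb : b =O[atTop] fun n => (n : ℝ) ^ q) :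
    seqConv a b =o[atTop] fun n => (n : ℝ) ^ (p + q + 1) := by
  obtain ⟨C, hC0, hC⟩ := bound_of_isBigO_nat_atTop
    (hb.trans (isTheta_natCast_add_one_pow q).symm.isBigO)
  have hbound (n : ℕ) :
      ‖seqConv a b n‖ ≤ (∑ k ∈ range (n + 1), |a k|) * (C * ((n : ℝ) + 1) ^ q) := by
    rw [seqConv, ← Nat.sum_antidiagonal_eq_sum_range_succ (fun k _ => |a k|), sum_mul]
    refine (norm_sum_le _ _).trans (sum_le_sum fun p hp => ?_)
    have hm : (p.2 : ℝ) ≤ n := by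
      exact_mod_cast (Nat.le_add_left _ _).trans (mem_antidiagonal.mp hp).le
    rw [norm_mul, Real.norm_eq_abs]
    gcongr
    refine (hC (by positivity)).trans ?_
    rw [Real.norm_of_nonneg (by positivity)]
    gcongr
  have hprod := (isLittleO_sum_range_succ_abs
    (ha.trans_isBigO (isTheta_natCast_add_one_pow p).symm.isBigO)).mul_isBigO
    (isBigO_const_mul_self C (fun n : ℕ => ((n : ℝ) + 1) ^ q) atTop)
  refine (isBigO_of_le _ fun n => (hbound n).trans (le_abs_self _)).trans_isLittleO
    (hprod.trans_isBigO ?_)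
  simp_rw [← pow_add, add_right_comm p 1 q]
  exact (isTheta_natCast_add_one_pow _).isBigO

theorem tendsto_sum_range_succ_pow_div (p : ℕ) :
    Tendsto (fun n : ℕ => (∑ k ∈ range (n + 1), (k : ℝ) ^ p) / (n : ℝ) ^ (p + 1)) atTop
      (nhds (1 / (p + 1))) := by
  have hmono (n : ℕ) : MonotoneOn (fun t : ℝ => t ^ p) (Set.Icc 0 (0 + n)) :=
    fun s hs t _ hst => pow_le_pow_left₀ hs.1 hst p
  have hint (n : ℕ) : ∫ t in (0 : ℝ)..0 + n, t ^ p = (n : ℝ) ^ (p + 1) / (p + 1) := by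
    simp [integral_pow]
  have hbounds (n : ℕ) : (n : ℝ) ^ (p + 1) / (p + 1) ≤ ∑ k ∈ range (n + 1), (k : ℝ) ^ p ∧
      ∑ k ∈ range (n + 1), (k : ℝ) ^ p ≤ (n : ℝ) ^ (p + 1) / (p + 1) + (n : ℝ) ^ p := by
    have hlow := (hmono n).integral_le_sum
    have hupp := (hmono n).sum_le_integral
    rw [hint] at hlow hupp
    push_cast at hlow hupp
    simp only [zero_add] at hlow hupp
    constructor
    · rw [sum_range_succ']
      push_cast
      linarith [pow_nonneg (le_refl (0 : ℝ)) p]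
    · rw [sum_range_succ]
      linarith
  refine tendsto_of_tendsto_of_tendsto_of_le_of_le' tendsto_const_nhds
    (by simpa using tendsto_const_nhds.add (tendsto_one_div_atTop_nhds_zero_nat (𝕜 := ℝ))) ?_ ?_
  all_goals filter_upwards [eventually_gt_atTop 0] with n hn
  · rw [le_div_iff₀ (by positivity), one_div_mul_eq_div]
    exact (hbounds n).1
  · rw [div_le_iff₀ (by positivity)]
    calc _ ≤ _ := (hbounds n).2
      _ = _ := by field_simp; ring

theorem tendsto_seqConv_pow_div (p q : ℕ) :
    Tendsto (fun n : ℕ =>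
        seqConv (fun k => (k : ℝ) ^ p) (fun m => (m : ℝ) ^ q) n / (n : ℝ) ^ (p + q + 1))
      atTop (nhds (∫ t in (0 : ℝ)..1, t ^ p * (1 - t) ^ q)) := by
  induction q generalizing p with
  | zero =>
    simp only [seqConv, pow_zero, mul_one, add_zero]
    rw [integral_pow]
    simpa [Nat.sum_antidiagonal_eq_sum_range_succ (fun k _ => (k : ℝ) ^ p)]
      using tendsto_sum_range_succ_pow_div p
  | succ q ih =>
    have hrec (n : ℕ) : seqConv (fun k => (k : ℝ) ^ p) (fun m => (m : ℝ) ^ (q + 1)) n =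
        n * seqConv (fun k => (k : ℝ) ^ p) (fun m => (m : ℝ) ^ q) n -
          seqConv (fun k => (k : ℝ) ^ (p + 1)) (fun m => (m : ℝ) ^ q) n := by
      simp only [seqConv, mul_sum, ← sum_sub_distrib]
      refine sum_congr rfl fun i hi => ?_
      rw [← mem_antidiagonal.mp hi]
      push_cast
      ring
    have hbeta : ∫ t in (0 : ℝ)..1, t ^ p * (1 - t) ^ (q + 1) =
        (∫ t in (0 : ℝ)..1, t ^ p * (1 - t) ^ q) -
          ∫ t in (0 : ℝ)..1, t ^ (p + 1) * (1 - t) ^ q := by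
      rw [← intervalIntegral.integral_sub
        (Continuous.intervalIntegrable (by fun_prop) _ _)
        (Continuous.intervalIntegrable (by fun_prop) _ _)]
      congr 1 with t
      ring
    rw [hbeta]
    refine ((ih p).sub (ih (p + 1))).congr' ?_
    filter_upwards [eventually_gt_atTop 0] with n hn
    rw [hrec]
    field_simp
    ring

theorem isLittleO_seqConv_sub_mul_pow {x y : ℕ → ℝ} {a b : ℝ} {p q : ℕ}
    (hx : (fun n => x n - a * (n : ℝ) ^ p) =o[atTop] fun n => (n : ℝ) ^ p)
    (hy : (fun n => y n - b * (n : ℝ) ^ q) =o[atTop] fun n => (n : ℝ) ^ q) :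
    (fun n => seqConv x y n -
        a * b * (∫ t in (0 : ℝ)..1, t ^ p * (1 - t) ^ q) * (n : ℝ) ^ (p + q + 1))
      =o[atTop] fun n => (n : ℝ) ^ (p + q + 1) := by
  set u : ℕ → ℝ := fun k => a * (k : ℝ) ^ p
  set w : ℕ → ℝ := fun m => b * (m : ℝ) ^ q
  have hsplit (n : ℕ) : seqConv x y n =
      seqConv (fun k => x k - u k) y n + seqConv (fun m => y m - w m) u n +
        a * b * seqConv (fun k => (k : ℝ) ^ p) (fun m => (m : ℝ) ^ q) n := by
    rw [seqConv_comm _ u]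
    simp only [seqConv, u, w, mul_sum, ← sum_add_distrib]
    exact sum_congr rfl fun i _ => by ring
  have hyO : y =O[atTop] fun n => (n : ℝ) ^ q :=
    (hy.isBigO.add (isBigO_const_mul_self b _ atTop)).congr_left fun n => sub_add_cancel _ _
  have hx_conv := isLittleO_seqConv hx hyO
  have hy_conv := isLittleO_seqConv hy (isBigO_const_mul_self a (fun k : ℕ => (k : ℝ) ^ p) atTop)
  rw [add_comm q p] at hy_conv
  have hkernel := ((isLittleO_sub_mul_pow_iff _ _ _).2
    (tendsto_seqConv_pow_div p q)).const_mul_left (a * b)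
  refine ((hx_conv.add hy_conv).add hkernel).congr_left fun n => ?_
  rw [hsplit]
  ring

theorem integral_pow_mul_one_sub_pow_pos (p q : ℕ) :
    0 < ∫ t in (0 : ℝ)..1, t ^ p * (1 - t) ^ q :=
  intervalIntegral.intervalIntegral_pos_of_pos_on (Continuous.intervalIntegrable (by fun_prop) _ _)
    (fun t ht => mul_pos (pow_pos ht.1 p) (pow_pos (sub_pos.2 ht.2) q)) zero_lt_one

theorem convolution_asymptotics_equal_general
    (x y : ℕ → ℝ)
    (aF aG : ℝ) (haF : 0 < aF) (haG : 0 < aG) (bF bG : ℕ) (c : ℝ)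
    (hx : Tendsto (fun n : ℕ => x n / (aF * (n : ℝ) ^ bF * c ^ n)) atTop (nhds 1))
    (hy : Tendsto (fun n : ℕ => y n / (aG * (n : ℝ) ^ bG * c ^ n)) atTop (nhds 1)) :
    Tendsto
      (fun n : ℕ => (∑ k ∈ Finset.range (n + 1), x k * y (n - k)) /
        (aF * aG * (∫ t in (0 : ℝ)..1, t ^ bF * (1 - t) ^ bG) *
          (n : ℝ) ^ (bF + bG + 1) * c ^ n))
      atTop (nhds 1) := by
  have hscale (u A : ℝ) (p n : ℕ) :
      u / (A * (n : ℝ) ^ p * c ^ n) = u / c ^ n / (A * (n : ℝ) ^ p) := by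
    rw [div_div, mul_comm (c ^ n)]
  have hx' := (isLittleO_sub_mul_pow_iff _ _ _).2
    ((tendsto_div_const_mul_iff haF.ne').1 (by simpa only [hscale] using hx))
  have hy' := (isLittleO_sub_mul_pow_iff _ _ _).2
    ((tendsto_div_const_mul_iff haG.ne').1 (by simpa only [hscale] using hy))
  have hA : aF * aG * (∫ t in (0 : ℝ)..1, t ^ bF * (1 - t) ^ bG) ≠ 0 :=
    (mul_pos (mul_pos haF haG) (integral_pow_mul_one_sub_pow_pos bF bG)).ne'
  have hz := (tendsto_div_const_mul_iff hA).2
    ((isLittleO_sub_mul_pow_iff _ _ _).1 (isLittleO_seqConv_sub_mul_pow hx' hy'))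
  refine hz.congr fun n => ?_
  rw [seqConv_div_pow, seqConv, Nat.sum_antidiagonal_eq_sum_range_succ (fun k m => x k * y m),
    hscale]

/-- **Convolution asymptotics, equal exponential case.**
If `xₙ/(a_F n^{b_F} cⁿ) → 1` and `yₙ/(a_G n^{b_G} cⁿ) → 1` with `a_F, a_G > 0`,
`b_F, b_G ∈ ℕ` and `c ≥ 1`, then the convolution `zₙ = ∑_{k+m=n} x_k y_m` satisfies
`zₙ/(a_F a_G B(b_F+1, b_G+1) n^{b_F+b_G+1} cⁿ) → 1`, where
`B(b_F+1, b_G+1) = ∫₀¹ t^{b_F} (1−t)^{b_G} dt` is the Euler Beta function. -/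
theorem convolution_asymptotics_equal
    (x y : ℕ → ℝ) (hx0 : ∀ n, 0 ≤ x n) (hy0 : ∀ n, 0 ≤ y n)
    (aF aG : ℝ) (haF : 0 < aF) (haG : 0 < aG) (bF bG : ℕ) (c : ℝ) (hc : 1 ≤ c)
    (hx : Tendsto (fun n : ℕ => x n / (aF * (n : ℝ) ^ bF * c ^ n)) atTop (nhds 1))
    (hy : Tendsto (fun n : ℕ => y n / (aG * (n : ℝ) ^ bG * c ^ n)) atTop (nhds 1)) :
    Tendsto
      (fun n : ℕ => (∑ k ∈ Finset.range (n + 1), x k * y (n - k)) /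
        (aF * aG * (∫ t in (0 : ℝ)..1, t ^ bF * (1 - t) ^ bG) *
          (n : ℝ) ^ (bF + bG + 1) * c ^ n))
      atTop (nhds 1) :=
  convolution_asymptotics_equal_general x y aF aG haF haG bF bG c hx hy
end
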